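/- arXiv:1411.5622 — 10 statements merged into one kernel-verified Lean document; each statement's English description precedes it below -/
import Mathlib

section
/- Let α ∈ (0,1], let t > 0, and let f : ℝ → ℝ be differentiable at t. Then the conformable fractional derivative of f at t exists and satisfies D^α f(t) = t^{1−α} f′(t), i.e. lim_{ε→0} [f(t·e^{ε t^{−α}}) − f(t)]/ε = t^{1−α} f′(t). -/
/-! The difference quotient is the slope at `0` of `ε ↦ f (t * exp (ε * t ^ (-α)))`, whose
derivative there is, by the chain rule, `t * t ^ (-α) * f' t = t ^ (1 - α) * f' t`. -/

lemma hasDerivAt_mul_exp_mul_zero (t c : ℝ) :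
    HasDerivAt (fun ε : ℝ => t * Real.exp (ε * c)) (t * c) 0 := by
  simpa using (((hasDerivAt_id (0 : ℝ)).mul_const c).exp).const_mul t

lemma hasDerivAt_comp_mul_exp_mul_zero {f : ℝ → ℝ} {f' t : ℝ} (hf : HasDerivAt f f' t)
    (c : ℝ) : HasDerivAt (fun ε : ℝ => f (t * Real.exp (ε * c))) (t * c * f') 0 := by
  have hf₀ : HasDerivAt f f' (t * Real.exp (0 * c)) := by simpa using hf
  exact (hf₀.comp 0 (hasDerivAt_mul_exp_mul_zero t c)).congr_deriv (mul_comm _ _)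

lemma Real.mul_rpow_neg {t : ℝ} (ht : 0 < t) (α : ℝ) : t * t ^ (-α) = t ^ (1 - α) := by
  rw [sub_eq_add_neg, Real.rpow_add ht, Real.rpow_one]

theorem conformable_deriv_of_differentiable_general
    (α : ℝ) (t : ℝ) (ht : 0 < t)
    (f : ℝ → ℝ) (hf : DifferentiableAt ℝ f t) :
    Filter.Tendsto (fun ε : ℝ => (f (t * Real.exp (ε * t ^ (-α))) - f t) / ε)
      (nhdsWithin 0 {(0:ℝ)}ᶜ) (nhds (t ^ (1 - α) * deriv f t)) := by
  have hF := hasDerivAt_comp_mul_exp_mul_zero hf.hasDerivAt (t ^ (-α))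
  rw [Real.mul_rpow_neg ht] at hF
  simpa [div_eq_inv_mul] using hasDerivAt_iff_tendsto_slope_zero.mp hF

/-- For `α ∈ (0,1]`, `t > 0`, and `f` differentiable at `t`, the conformable
fractional derivative `D^α f(t) := lim_{ε→0} [f(t·e^{ε t^{−α}}) − f(t)]/ε` exists and equals
`t^{1−α} f′(t)`. -/
theorem conformable_deriv_of_differentiable
    (α : ℝ) (hα : α ∈ Set.Ioc (0:ℝ) 1) (t : ℝ) (ht : 0 < t)
    (f : ℝ → ℝ) (hf : DifferentiableAt ℝ f t) :
    Filter.Tendsto (fun ε : ℝ => (f (t * Real.exp (ε * t ^ (-α))) - f t) / ε)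
      (nhdsWithin 0 {(0:ℝ)}ᶜ) (nhds (t ^ (1 - α) * deriv f t)) :=
  conformable_deriv_of_differentiable_general α t ht f hf
end

section
/- Let α, β ∈ (0,1], let γ, δ, η, ζ ≥ 0 with d := ηδ + γζ + γη/α > 0, let G be the associated general Green's function, and let h : [0,1] → ℝ be continuous. Define x(t) = ∫₀¹ G(t,s) h(s) s^{β−1} ds. Then for every t ∈ (0,1), the function y(t) := t^{1−α} x′(t) is well defined (x is differentiable at t), y is differentiable at t, and −t^{1−β} y′(t) = h(t). -/
/-!
Write `G(t,s) = φ(s ∧ t) ψ(s ∨ t)` with `φ(s) = (δ + (γ/α)s^α)/d` and `ψ(t) = ζ + (η/α)(1 - t^α)`.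
Splitting the integral at `s = t` gives `x(t) = ψ(t) ∫₀ᵗ φ g + φ(t) ∫ₜ¹ ψ g` with `g(s) = h(s)s^{β-1}`;
on differentiating, the boundary terms cancel, so `x' = ψ' ∫₀ᵗ φ g + φ' ∫ₜ¹ ψ g`.
Since `t^{1-α}φ' = γ/d` and `t^{1-α}ψ' = -η` are constant, differentiating `t^{1-α}x'` once more leaves
only `(-ηφ - (γ/d)ψ) g`, and this Wronskian-type factor equals `-1` precisely because
`d = ηδ + γζ + γη/α`.
-/

open MeasureTheory Set Filter Topology intervalIntegral

noncomputable def separableKernel (φ ψ : ℝ → ℝ) (t s : ℝ) : ℝ :=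
  if s ≤ t then φ s * ψ t else φ t * ψ s

lemma separableKernel_of_le (φ ψ : ℝ → ℝ) {t s : ℝ} (h : s ≤ t) :
    separableKernel φ ψ t s = φ s * ψ t :=
  if_pos h

lemma separableKernel_of_ge (φ ψ : ℝ → ℝ) {t s : ℝ} (h : t ≤ s) :
    separableKernel φ ψ t s = φ t * ψ s := by
  rcases h.lt_or_eq with h | rfl
  · exact if_neg h.not_ge
  · exact if_pos le_rfl

section SeparableKernel

variable {φ ψ g : ℝ → ℝ} {l r t : ℝ}

lemma intervalIntegrable_mul_of_continuousOn_Icc (hφ : ContinuousOn φ (Icc l r))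
    (hg : IntervalIntegrable g volume l r) {a b : ℝ} (ha : a ∈ Icc l r) (hb : b ∈ Icc l r) :
    IntervalIntegrable (fun s => φ s * g s) volume a b := by
  have hsub : uIcc a b ⊆ Icc l r := uIcc_subset_Icc ha hb
  exact (hg.mono_set (by rwa [uIcc_of_le (ha.1.trans ha.2)])).continuousOn_mul (hφ.mono hsub)

lemma hasDerivAt_integral_mul_right (hφ : ContinuousOn φ (Icc l r))
    (hg : IntervalIntegrable g volume l r) (hgc : ContinuousOn g (Ioo l r)) (ht : t ∈ Ioo l r)
    {a : ℝ} (ha : a ∈ Icc l r) :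
    HasDerivAt (fun u => ∫ s in a..u, φ s * g s) (φ t * g t) t :=
  integral_hasDerivAt_right
    (intervalIntegrable_mul_of_continuousOn_Icc hφ hg ha (Ioo_subset_Icc_self ht))
    (((hφ.mono Ioo_subset_Icc_self).mul hgc).stronglyMeasurableAtFilter isOpen_Ioo t ht)
    ((hφ.continuousAt (Icc_mem_nhds ht.1 ht.2)).mul (hgc.continuousAt (Ioo_mem_nhds ht.1 ht.2)))

lemma hasDerivAt_integral_mul_left (hφ : ContinuousOn φ (Icc l r))
    (hg : IntervalIntegrable g volume l r) (hgc : ContinuousOn g (Ioo l r)) (ht : t ∈ Ioo l r)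
    {b : ℝ} (hb : b ∈ Icc l r) :
    HasDerivAt (fun u => ∫ s in u..b, φ s * g s) (-(φ t * g t)) t := by
  simp only [integral_symm b]
  exact (hasDerivAt_integral_mul_right hφ hg hgc ht hb).neg

lemma integral_separableKernel_mul (hφ : ContinuousOn φ (Icc l r)) (hψ : ContinuousOn ψ (Icc l r))
    (hg : IntervalIntegrable g volume l r) (ht : t ∈ Icc l r) :
    ∫ s in l..r, separableKernel φ ψ t s * g s =
      ψ t * (∫ s in l..t, φ s * g s) + φ t * ∫ s in t..r, ψ s * g s := by
  have hl : l ∈ Icc l r := left_mem_Icc.2 (ht.1.trans ht.2)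
  have hr : r ∈ Icc l r := right_mem_Icc.2 (ht.1.trans ht.2)
  have hleft : EqOn (fun s => separableKernel φ ψ t s * g s) (fun s => ψ t * (φ s * g s))
      (uIcc l t) := by
    intro s hs
    rw [uIcc_of_le ht.1] at hs
    simp only [separableKernel_of_le φ ψ hs.2]
    ring
  have hright : EqOn (fun s => separableKernel φ ψ t s * g s) (fun s => φ t * (ψ s * g s))
      (uIcc t r) := by
    intro s hs
    rw [uIcc_of_le ht.2] at hs
    simp only [separableKernel_of_ge φ ψ hs.1]
    ring
  have hint_left : IntervalIntegrable (fun s => separableKernel φ ψ t s * g s) volume l t :=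
    ((intervalIntegrable_mul_of_continuousOn_Icc hφ hg hl ht).const_mul (ψ t)).congr_uIoo
      (hleft.mono uIoo_subset_uIcc_self).symm
  have hint_right : IntervalIntegrable (fun s => separableKernel φ ψ t s * g s) volume t r :=
    ((intervalIntegrable_mul_of_continuousOn_Icc hψ hg ht hr).const_mul (φ t)).congr_uIoo
      (hright.mono uIoo_subset_uIcc_self).symm
  rw [← integral_add_adjacent_intervals hint_left hint_right, integral_congr hleft,
    integral_congr hright, intervalIntegral.integral_const_mul,
    intervalIntegral.integral_const_mul]

/-- The boundary terms `ψ(t)φ(t)g(t)` from the two integrals cancel. -/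
lemma hasDerivAt_integral_separableKernel_mul (hφ : ContinuousOn φ (Icc l r))
    (hψ : ContinuousOn ψ (Icc l r)) (hg : IntervalIntegrable g volume l r)
    (hgc : ContinuousOn g (Ioo l r)) {φ' ψ' : ℝ} (ht : t ∈ Ioo l r)
    (hφ' : HasDerivAt φ φ' t) (hψ' : HasDerivAt ψ ψ' t) :
    HasDerivAt (fun u => ∫ s in l..r, separableKernel φ ψ u s * g s)
      (ψ' * (∫ s in l..t, φ s * g s) + φ' * ∫ s in t..r, ψ s * g s) t := by
  have hlr : l ≤ r := ht.1.le.trans ht.2.le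
  have hsplit : (fun u => ψ u * (∫ s in l..u, φ s * g s) + φ u * ∫ s in u..r, ψ s * g s)
      =ᶠ[𝓝 t] fun u => ∫ s in l..r, separableKernel φ ψ u s * g s :=
    eventually_of_mem (Ioo_mem_nhds ht.1 ht.2) fun u hu =>
      (integral_separableKernel_mul hφ hψ hg (Ioo_subset_Icc_self hu)).symm
  have hderiv :=
    (hψ'.mul (hasDerivAt_integral_mul_right hφ hg hgc ht (left_mem_Icc.2 hlr))).add
      (hφ'.mul (hasDerivAt_integral_mul_left hψ hg hgc ht (right_mem_Icc.2 hlr)))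
  refine (hderiv.congr_of_eventuallyEq hsplit.symm).congr_deriv ?_
  ring

lemma hasDerivAt_mul_deriv_integral_separableKernel_mul (hφ : ContinuousOn φ (Icc l r))
    (hψ : ContinuousOn ψ (Icc l r)) (hg : IntervalIntegrable g volume l r)
    (hgc : ContinuousOn g (Ioo l r)) {p φ' ψ' : ℝ → ℝ} {c₁ c₂ : ℝ}
    (hφ' : ∀ u ∈ Ioo l r, HasDerivAt φ (φ' u) u) (hψ' : ∀ u ∈ Ioo l r, HasDerivAt ψ (ψ' u) u)
    (hpφ : ∀ u ∈ Ioo l r, p u * φ' u = c₁) (hpψ : ∀ u ∈ Ioo l r, p u * ψ' u = c₂)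
    (ht : t ∈ Ioo l r) :
    HasDerivAt (fun u => p u * deriv (fun v => ∫ s in l..r, separableKernel φ ψ v s * g s) u)
      ((c₂ * φ t - c₁ * ψ t) * g t) t := by
  have hlr : l ≤ r := ht.1.le.trans ht.2.le
  have hflux : (fun u => c₂ * (∫ s in l..u, φ s * g s) + c₁ * ∫ s in u..r, ψ s * g s)
      =ᶠ[𝓝 t] fun u => p u * deriv (fun v => ∫ s in l..r, separableKernel φ ψ v s * g s) u :=
    eventually_of_mem (Ioo_mem_nhds ht.1 ht.2) fun u hu => by
      dsimp only
      rw [(hasDerivAt_integral_separableKernel_mul hφ hψ hg hgc hu (hφ' u hu) (hψ' u hu)).deriv,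
        mul_add, ← mul_assoc, ← mul_assoc, hpφ u hu, hpψ u hu]
  have hderiv :=
    ((hasDerivAt_integral_mul_right hφ hg hgc ht (left_mem_Icc.2 hlr)).const_mul c₂).add
      ((hasDerivAt_integral_mul_left hψ hg hgc ht (right_mem_Icc.2 hlr)).const_mul c₁)
  refine (hderiv.congr_of_eventuallyEq hflux.symm).congr_deriv ?_
  ring

end SeparableKernel

lemma Real.rpow_one_sub_mul_rpow_sub_one {u : ℝ} (hu : 0 < u) (a : ℝ) :
    u ^ (1 - a) * u ^ (a - 1) = 1 := by
  rw [← Real.rpow_add hu, sub_add_sub_cancel', sub_self, Real.rpow_zero]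

noncomputable def greenLeft (α γ δ d s : ℝ) : ℝ := 1 / d * (δ + γ / α * s ^ α)

noncomputable def greenRight (α η ζ s : ℝ) : ℝ := ζ + η / α * (1 - s ^ α)

section GreenFactors

variable {α : ℝ} (γ δ η ζ d : ℝ)

lemma continuous_greenLeft (hα : 0 ≤ α) : Continuous (greenLeft α γ δ d) := by
  have := Real.continuous_rpow_const hα
  unfold greenLeft
  fun_prop

lemma continuous_greenRight (hα : 0 ≤ α) : Continuous (greenRight α η ζ) := by
  have := Real.continuous_rpow_const hα
  unfold greenRight
  fun_prop

lemma hasDerivAt_greenLeft (hα : α ≠ 0) {u : ℝ} (hu : u ≠ 0) :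
    HasDerivAt (greenLeft α γ δ d) (γ / d * u ^ (α - 1)) u :=
  (((Real.hasDerivAt_rpow_const (Or.inl hu)).const_mul (γ / α)).const_add δ
    |>.const_mul (1 / d)).congr_deriv (by field_simp)

lemma hasDerivAt_greenRight (hα : α ≠ 0) {u : ℝ} (hu : u ≠ 0) :
    HasDerivAt (greenRight α η ζ) (-η * u ^ (α - 1)) u :=
  ((((Real.hasDerivAt_rpow_const (Or.inl hu)).const_sub 1).const_mul (η / α)).const_add ζ
    ).congr_deriv (by field_simp)

lemma mul_greenLeft_add_div_mul_greenRight (t : ℝ) :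
    η * greenLeft α γ δ d t + γ / d * greenRight α η ζ t = (η * δ + γ * ζ + γ * η / α) / d := by
  unfold greenLeft greenRight
  ring

end GreenFactors

theorem greens_function_solves_ode_general
    (α β : ℝ) (hα : α ∈ Set.Ioc (0:ℝ) 1) (hβ : β ∈ Set.Ioc (0:ℝ) 1)
    (γ δ η ζ : ℝ)
    (d : ℝ) (hd : d = η * δ + γ * ζ + γ * η / α) (hdpos : 0 < d)
    (G : ℝ → ℝ → ℝ)
    (hG : ∀ t s : ℝ, G t s = if s ≤ t
        then (1 / d) * (δ + (γ / α) * s ^ α) * (ζ + (η / α) * (1 - t ^ α))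
        else (1 / d) * (δ + (γ / α) * t ^ α) * (ζ + (η / α) * (1 - s ^ α)))
    (h : ℝ → ℝ) (hh : ContinuousOn h (Set.Icc 0 1))
    (x : ℝ → ℝ) (hx : ∀ t : ℝ, x t = ∫ s in (0:ℝ)..1, G t s * h s * s ^ (β - 1)) :
    ∀ t ∈ Set.Ioo (0:ℝ) 1,
      DifferentiableAt ℝ x t ∧
      DifferentiableAt ℝ (fun u : ℝ => u ^ (1 - α) * deriv x u) t ∧
      -(t ^ (1 - β)) * deriv (fun u : ℝ => u ^ (1 - α) * deriv x u) t = h t := by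
  intro t ht
  set φ := greenLeft α γ δ d
  set ψ := greenRight α η ζ
  set g : ℝ → ℝ := fun s => h s * s ^ (β - 1)
  have hxK : x = fun u => ∫ s in (0:ℝ)..1, separableKernel φ ψ u s * g s := by
    funext u
    simp only [hx, hG, separableKernel, φ, ψ, g, greenLeft, greenRight, mul_assoc]
  subst hxK
  have hφ := (continuous_greenLeft γ δ d hα.1.le).continuousOn (s := Icc 0 1)
  have hψ := (continuous_greenRight η ζ hα.1.le).continuousOn (s := Icc 0 1)
  have hg : IntervalIntegrable g volume 0 1 :=
    (intervalIntegrable_rpow' (by linarith [hβ.1])).continuousOn_mul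
      (by rwa [uIcc_of_le zero_le_one])
  have hgc : ContinuousOn g (Ioo 0 1) :=
    (hh.mono Ioo_subset_Icc_self).mul (continuousOn_id.rpow_const fun u hu => Or.inl hu.1.ne')
  have hφ' (u) (hu : u ∈ Ioo (0:ℝ) 1) := hasDerivAt_greenLeft γ δ d hα.1.ne' hu.1.ne'
  have hψ' (u) (hu : u ∈ Ioo (0:ℝ) 1) := hasDerivAt_greenRight η ζ hα.1.ne' hu.1.ne'
  have hy := hasDerivAt_mul_deriv_integral_separableKernel_mul hφ hψ hg hgc hφ' hψ'
    (fun u hu => by rw [mul_left_comm, Real.rpow_one_sub_mul_rpow_sub_one hu.1, mul_one])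
    (fun u hu => by rw [mul_left_comm, Real.rpow_one_sub_mul_rpow_sub_one hu.1, mul_one]) ht
  refine ⟨(hasDerivAt_integral_separableKernel_mul hφ hψ hg hgc ht (hφ' t ht)
    (hψ' t ht)).differentiableAt, hy.differentiableAt, ?_⟩
  have hwronskian : η * φ t + γ / d * ψ t = 1 := by
    rw [mul_greenLeft_add_div_mul_greenRight, ← hd, div_self hdpos.ne']
  rw [hy.deriv, show -η * φ t - γ / d * ψ t = -1 by linarith, neg_one_mul, neg_mul_neg]
  change t ^ (1 - β) * (h t * t ^ (β - 1)) = h t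
  rw [mul_left_comm, Real.rpow_one_sub_mul_rpow_sub_one ht.1, mul_one]

/-- With `α, β ∈ (0,1]`, parameters `γ, δ, η, ζ ≥ 0`, `d = ηδ + γζ + γη/α > 0`,
`G` the general Green's function, `h` continuous on `[0,1]`, and
`x(t) = ∫₀¹ G(t,s) h(s) s^{β−1} ds`, for every `t ∈ (0,1)` the function `x` is differentiable
at `t`, `y(u) := u^{1−α} x′(u)` is differentiable at `t`, and `−t^{1−β} y′(t) = h(t)`. -/
theorem greens_function_solves_ode
    (α β : ℝ) (hα : α ∈ Set.Ioc (0:ℝ) 1) (hβ : β ∈ Set.Ioc (0:ℝ) 1)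
    (γ δ η ζ : ℝ) (hγ : 0 ≤ γ) (hδ : 0 ≤ δ) (hη : 0 ≤ η) (hζ : 0 ≤ ζ)
    (d : ℝ) (hd : d = η * δ + γ * ζ + γ * η / α) (hdpos : 0 < d)
    (G : ℝ → ℝ → ℝ)
    (hG : ∀ t s : ℝ, G t s = if s ≤ t
        then (1 / d) * (δ + (γ / α) * s ^ α) * (ζ + (η / α) * (1 - t ^ α))
        else (1 / d) * (δ + (γ / α) * t ^ α) * (ζ + (η / α) * (1 - s ^ α)))
    (h : ℝ → ℝ) (hh : ContinuousOn h (Set.Icc 0 1))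
    (x : ℝ → ℝ) (hx : ∀ t : ℝ, x t = ∫ s in (0:ℝ)..1, G t s * h s * s ^ (β - 1)) :
    ∀ t ∈ Set.Ioo (0:ℝ) 1,
      DifferentiableAt ℝ x t ∧
      DifferentiableAt ℝ (fun u : ℝ => u ^ (1 - α) * deriv x u) t ∧
      -(t ^ (1 - β)) * deriv (fun u : ℝ => u ^ (1 - α) * deriv x u) t = h t :=
  greens_function_solves_ode_general α β hα hβ γ δ η ζ d hd hdpos G hG h hh x hx
end

section
/- Let α, β ∈ (0,1], let γ, δ, η, ζ ≥ 0 with d := ηδ + γζ + γη/α > 0, let G be the associated general Green's function, let h : [0,1] → ℝ be continuous, and define x(t) = ∫₀¹ G(t,s) h(s) s^{β−1} ds. Then for every t ∈ (0,1), x is differentiable at t with t^{1−α} x′(t) = −(η/d) ∫₀ᵗ [δ + (γ/α)s^α] h(s) s^{β−1} ds + (γ/d) ∫ₜ¹ [ζ + (η/α)(1 − s^α)] h(s) s^{β−1} ds. -/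
open MeasureTheory intervalIntegral Set Filter Topology

/-!
For `s ≤ t` the Green's function factors as `φ(s) ψ(t)` and for `t ≤ s` as `φ(t) ψ(s)`, with
`φ(s) = (δ + (γ/α) s^α)/d` and `ψ(t) = ζ + (η/α)(1 − t^α)`. Hence
`x(t) = ψ(t) ∫₀ᵗ φ f + φ(t) ∫ₜ¹ ψ f` with `f(s) = h(s) s^{β−1}`, and by the fundamental theorem of
calculus `x′(t) = ψ′(t) ∫₀ᵗ φ f + φ′(t) ∫ₜ¹ ψ f`: the two boundary terms `± φ(t) ψ(t) f(t)`
cancel. Since `φ′(t) = (γ/d) t^{α−1}` and `ψ′(t) = −η t^{α−1}`, multiplying by `t^{1−α}` gives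
the formula.
-/

noncomputable def greenKernel (φ ψ : ℝ → ℝ) (t s : ℝ) : ℝ :=
  if s ≤ t then φ s * ψ t else φ t * ψ s

theorem IntervalIntegrable.stronglyMeasurableAtFilter_nhds {f : ℝ → ℝ} {a b t : ℝ}
    (hf : IntervalIntegrable f volume a b) (ht : t ∈ Ioo a b) :
    StronglyMeasurableAtFilter f (𝓝 t) volume :=
  ⟨Ioo a b, Ioo_mem_nhds ht.1 ht.2, (hf.1.mono_set Ioo_subset_Ioc_self).aestronglyMeasurable⟩

section GreenKernel

variable {φ ψ f : ℝ → ℝ} {a b : ℝ}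

theorem integral_greenKernel_mul {τ : ℝ} (hτ : τ ∈ Icc a b)
    (hφf : IntervalIntegrable (fun s => φ s * f s) volume a b)
    (hψf : IntervalIntegrable (fun s => ψ s * f s) volume a b) :
    ∫ s in a..b, greenKernel φ ψ τ s * f s =
      ψ τ * (∫ s in a..τ, φ s * f s) + φ τ * ∫ s in τ..b, ψ s * f s := by
  have hlow : EqOn (fun s => ψ τ * (φ s * f s)) (fun s => greenKernel φ ψ τ s * f s)
      (uIoo a τ) := by
    intro s hs
    rw [uIoo_of_le hτ.1] at hs
    simp only [greenKernel, if_pos hs.2.le]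
    ring
  have hupp : EqOn (fun s => φ τ * (ψ s * f s)) (fun s => greenKernel φ ψ τ s * f s)
      (uIoo τ b) := by
    intro s hs
    rw [uIoo_of_le hτ.2] at hs
    simp only [greenKernel, if_neg (not_le.2 hs.1)]
    ring
  have hab : a ≤ b := hτ.1.trans hτ.2
  have hτ' : τ ∈ uIcc a b := by rwa [uIcc_of_le hab]
  have hlowInt : IntervalIntegrable (fun s => greenKernel φ ψ τ s * f s) volume a τ :=
    ((hφf.mono_set (uIcc_subset_uIcc_left hτ')).const_mul (ψ τ)).congr_uIoo hlow
  have huppInt : IntervalIntegrable (fun s => greenKernel φ ψ τ s * f s) volume τ b :=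
    ((hψf.mono_set (uIcc_subset_uIcc_right hτ')).const_mul (φ τ)).congr_uIoo hupp
  rw [← integral_add_adjacent_intervals hlowInt huppInt, ← integral_congr_uIoo hlow,
    ← integral_congr_uIoo hupp, intervalIntegral.integral_const_mul,
    intervalIntegral.integral_const_mul]

theorem hasDerivAt_integral_greenKernel_mul {φ' ψ' t : ℝ} (ht : t ∈ Ioo a b)
    (hφ : HasDerivAt φ φ' t) (hψ : HasDerivAt ψ ψ' t) (hf : ContinuousAt f t)
    (hφf : IntervalIntegrable (fun s => φ s * f s) volume a b)
    (hψf : IntervalIntegrable (fun s => ψ s * f s) volume a b) :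
    HasDerivAt (fun τ => ∫ s in a..b, greenKernel φ ψ τ s * f s)
      (ψ' * (∫ s in a..t, φ s * f s) + φ' * ∫ s in t..b, ψ s * f s) t := by
  have ht' : t ∈ uIcc a b := by rw [uIcc_of_le (ht.1.trans ht.2).le]; exact Ioo_subset_Icc_self ht
  have hlow : HasDerivAt (fun τ => ∫ s in a..τ, φ s * f s) (φ t * f t) t :=
    integral_hasDerivAt_right (hφf.mono_set (uIcc_subset_uIcc_left ht'))
      (hφf.stronglyMeasurableAtFilter_nhds ht) (hφ.continuousAt.mul hf)
  have hupp : HasDerivAt (fun τ => ∫ s in τ..b, ψ s * f s) (-(ψ t * f t)) t :=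
    integral_hasDerivAt_left (hψf.mono_set (uIcc_subset_uIcc_right ht'))
      (hψf.stronglyMeasurableAtFilter_nhds ht) (hψ.continuousAt.mul hf)
  have hsplit : (fun τ => ∫ s in a..b, greenKernel φ ψ τ s * f s) =ᶠ[𝓝 t]
      fun τ => ψ τ * (∫ s in a..τ, φ s * f s) + φ τ * ∫ s in τ..b, ψ s * f s :=
    eventuallyEq_of_mem (Ioo_mem_nhds ht.1 ht.2) fun τ hτ =>
      integral_greenKernel_mul (Ioo_subset_Icc_self hτ) hφf hψf
  exact ((hψ.mul hlow).add (hφ.mul hupp)).congr_of_eventuallyEq hsplit |>.congr_deriv (by ring)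

end GreenKernel

theorem rpow_one_sub_mul_deriv {x : ℝ → ℝ} {α c t : ℝ} (ht : 0 < t)
    (hx : HasDerivAt x (t ^ (α - 1) * c) t) : t ^ (1 - α) * deriv x t = c := by
  rw [hx.deriv, ← mul_assoc, ← Real.rpow_add ht, sub_add_sub_cancel', sub_self, Real.rpow_zero,
    one_mul]

theorem alpha_deriv_of_greens_solution_general
    (α β : ℝ) (hα : α ∈ Set.Ioc (0:ℝ) 1) (hβ : β ∈ Set.Ioc (0:ℝ) 1)
    (γ δ η ζ : ℝ)
    (d : ℝ)
    (G : ℝ → ℝ → ℝ)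
    (hG : ∀ t s : ℝ, G t s = if s ≤ t
        then (1 / d) * (δ + (γ / α) * s ^ α) * (ζ + (η / α) * (1 - t ^ α))
        else (1 / d) * (δ + (γ / α) * t ^ α) * (ζ + (η / α) * (1 - s ^ α)))
    (h : ℝ → ℝ) (hh : ContinuousOn h (Set.Icc 0 1))
    (x : ℝ → ℝ) (hx : ∀ t : ℝ, x t = ∫ s in (0:ℝ)..1, G t s * h s * s ^ (β - 1)) :
    ∀ t ∈ Set.Ioo (0:ℝ) 1,
      DifferentiableAt ℝ x t ∧
      t ^ (1 - α) * deriv x t =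
        -(η / d) * (∫ s in (0:ℝ)..t, (δ + (γ / α) * s ^ α) * h s * s ^ (β - 1))
          + (γ / d) * ∫ s in t..(1:ℝ), (ζ + (η / α) * (1 - s ^ α)) * h s * s ^ (β - 1) := by
  rintro t ⟨ht0, ht1⟩
  have hx_eq : x = fun τ => ∫ s in (0:ℝ)..1, greenKernel (fun s => 1 / d * (δ + γ / α * s ^ α))
      (fun s => ζ + η / α * (1 - s ^ α)) τ s * (h s * s ^ (β - 1)) := by
    funext τ
    simp only [hx, hG, greenKernel, mul_assoc]
  have hpow := Real.hasDerivAt_rpow_const (p := α) (Or.inl ht0.ne')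
  have hφ : HasDerivAt (fun s => 1 / d * (δ + γ / α * s ^ α)) (γ / d * t ^ (α - 1)) t :=
    (((hpow.const_mul (γ / α)).const_add δ).const_mul (1 / d)).congr_deriv
      (by field_simp [hα.1.ne'])
  have hψ : HasDerivAt (fun s => ζ + η / α * (1 - s ^ α)) (-η * t ^ (α - 1)) t :=
    (((hpow.const_sub 1).const_mul (η / α)).const_add ζ).congr_deriv (by field_simp [hα.1.ne'])
  have hf : IntervalIntegrable (fun s => h s * s ^ (β - 1)) volume 0 1 :=
    (intervalIntegrable_rpow' (by linarith [hβ.1])).continuousOn_mul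
      (by rwa [uIcc_of_le zero_le_one])
  have hder := hasDerivAt_integral_greenKernel_mul (f := fun s => h s * s ^ (β - 1)) ⟨ht0, ht1⟩
    hφ hψ ((hh.continuousAt (Icc_mem_nhds ht0 ht1)).mul
      (Real.continuousAt_rpow_const t _ (Or.inl ht0.ne')))
    (hf.continuousOn_mul (by fun_prop (disch := exact hα.1.le)))
    (hf.continuousOn_mul (by fun_prop (disch := exact hα.1.le)))
  rw [← hx_eq] at hder
  refine ⟨hder.differentiableAt, rpow_one_sub_mul_deriv ht0 (hder.congr_deriv ?_)⟩
  simp only [mul_assoc, intervalIntegral.integral_const_mul]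
  ring

/-- With the setup of the general Green's function problem, for every
`t ∈ (0,1)` the function `x` is differentiable at `t` and
`t^{1−α} x′(t) = −(η/d) ∫₀ᵗ [δ + (γ/α)s^α] h(s) s^{β−1} ds
 + (γ/d) ∫ₜ¹ [ζ + (η/α)(1 − s^α)] h(s) s^{β−1} ds`. -/
theorem alpha_deriv_of_greens_solution
    (α β : ℝ) (hα : α ∈ Set.Ioc (0:ℝ) 1) (hβ : β ∈ Set.Ioc (0:ℝ) 1)
    (γ δ η ζ : ℝ) (hγ : 0 ≤ γ) (hδ : 0 ≤ δ) (hη : 0 ≤ η) (hζ : 0 ≤ ζ)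
    (d : ℝ) (hd : d = η * δ + γ * ζ + γ * η / α) (hdpos : 0 < d)
    (G : ℝ → ℝ → ℝ)
    (hG : ∀ t s : ℝ, G t s = if s ≤ t
        then (1 / d) * (δ + (γ / α) * s ^ α) * (ζ + (η / α) * (1 - t ^ α))
        else (1 / d) * (δ + (γ / α) * t ^ α) * (ζ + (η / α) * (1 - s ^ α)))
    (h : ℝ → ℝ) (hh : ContinuousOn h (Set.Icc 0 1))
    (x : ℝ → ℝ) (hx : ∀ t : ℝ, x t = ∫ s in (0:ℝ)..1, G t s * h s * s ^ (β - 1)) :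
    ∀ t ∈ Set.Ioo (0:ℝ) 1,
      DifferentiableAt ℝ x t ∧
      t ^ (1 - α) * deriv x t =
        -(η / d) * (∫ s in (0:ℝ)..t, (δ + (γ / α) * s ^ α) * h s * s ^ (β - 1))
          + (γ / d) * ∫ s in t..(1:ℝ), (ζ + (η / α) * (1 - s ^ α)) * h s * s ^ (β - 1) :=
  alpha_deriv_of_greens_solution_general α β hα hβ γ δ η ζ d G hG h hh x hx
end

section
/- Let α, β ∈ (0,1], let γ, δ, η, ζ ≥ 0 with d := ηδ + γζ + γη/α > 0, let G be the associated general Green's function, let h : [0,1] → ℝ be continuous, and define x(t) = ∫₀¹ G(t,s) h(s) s^{β−1} ds. Then the limit L₀ := lim_{t→0⁺} t^{1−α} x′(t) exists, equals (γ/d) ∫₀¹ [ζ + (η/α)(1 − s^α)] h(s) s^{β−1} ds, and the left boundary condition γ x(0) − δ L₀ = 0 holds. -/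
/-!
Writing `G(t,s) = c φ(min(s,t)) ψ(max(s,t))` with `φ(s) = δ + (γ/α)s^α`, `ψ(t) = ζ + (η/α)(1 - t^α)`
and `c = 1/d`, the integral splits as `x(t) = c (ψ(t) A(t) + φ(t) B(t))` with
`A(t) = ∫₀ᵗ φ f`, `B(t) = ∫ₜ¹ ψ f` and `f(s) = h(s) s^{β-1}`. When differentiating, the two
terms coming from `A'` and `B'` cancel, so `x' = c (ψ' A + φ' B)`. Since `t^{1-α} φ'(t) = γ` and
`t^{1-α} ψ'(t) = -η`, the conformable derivative is `c (γ B(t) - η A(t)) → c γ B(0)`, while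
`x(0) = c δ B(0)`.
-/

open Set MeasureTheory Filter Topology intervalIntegral

theorem tendsto_primitive_nhdsGT_zero {g : ℝ → ℝ} (hg : IntervalIntegrable g volume 0 1) :
    Tendsto (fun u => ∫ s in (0 : ℝ)..u, g s) (𝓝[>] 0) (𝓝 0) := by
  have hcont := continuousOn_primitive_interval' hg left_mem_uIcc 0 left_mem_uIcc
  rw [uIcc_of_le zero_le_one] at hcont
  rw [← nhdsWithin_Ioo_eq_nhdsGT zero_lt_one]
  simpa only [integral_same] using (hcont.mono Ioo_subset_Icc_self).tendsto

theorem tendsto_integral_nhdsGT_zero {g : ℝ → ℝ} (hg : IntervalIntegrable g volume 0 1) :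
    Tendsto (fun u => ∫ s in u..(1 : ℝ), g s) (𝓝[>] 0) (𝓝 (∫ s in (0 : ℝ)..1, g s)) := by
  have hlim := (tendsto_primitive_nhdsGT_zero hg).const_sub (∫ s in (0 : ℝ)..1, g s)
  rw [sub_zero] at hlim
  refine hlim.congr' ?_
  filter_upwards [Ioo_mem_nhdsGT (zero_lt_one' ℝ)] with u hu
  have hu' : u ∈ uIcc (0 : ℝ) 1 := by rw [uIcc_of_le zero_le_one]; exact Ioo_subset_Icc_self hu
  exact integral_interval_sub_left hg (hg.mono_set (uIcc_subset_uIcc_left hu'))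

section SeparableKernel

variable {G : ℝ → ℝ → ℝ} {c : ℝ} {φ ψ f : ℝ → ℝ}

theorem integral_separableKernel_mul_eq
    (hG : ∀ t s, G t s = if s ≤ t then c * φ s * ψ t else c * φ t * ψ s)
    (hφf : IntervalIntegrable (fun s => φ s * f s) volume 0 1)
    (hψf : IntervalIntegrable (fun s => ψ s * f s) volume 0 1) {t : ℝ} (ht : t ∈ Icc (0 : ℝ) 1) :
    ∫ s in (0 : ℝ)..1, G t s * f s
      = c * (ψ t * (∫ s in (0 : ℝ)..t, φ s * f s) + φ t * ∫ s in t..(1 : ℝ), ψ s * f s) := by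
  have ht' : t ∈ uIcc (0 : ℝ) 1 := by rwa [uIcc_of_le zero_le_one]
  have eq₁ : EqOn (fun s => G t s * f s) (fun s => c * ψ t * (φ s * f s)) (uIcc 0 t) := by
    intro s hs
    rw [uIcc_of_le ht.1] at hs
    simp only [hG, if_pos hs.2]
    ring
  have eq₂ : EqOn (fun s => G t s * f s) (fun s => c * φ t * (ψ s * f s)) (uIcc t 1) := by
    intro s hs
    rw [uIcc_of_le ht.2] at hs
    rcases hs.1.eq_or_lt with rfl | hts
    · simp only [hG, le_refl, if_true]
      ring
    · simp only [hG, if_neg hts.not_ge]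
      ring
  have int₁ : IntervalIntegrable (fun s => G t s * f s) volume 0 t :=
    ((hφf.mono_set (uIcc_subset_uIcc_left ht')).const_mul (c * ψ t)).congr
      fun s hs => (eq₁ (uIoc_subset_uIcc hs)).symm
  have int₂ : IntervalIntegrable (fun s => G t s * f s) volume t 1 :=
    ((hψf.mono_set (uIcc_subset_uIcc_right ht')).const_mul (c * φ t)).congr
      fun s hs => (eq₂ (uIoc_subset_uIcc hs)).symm
  rw [← integral_add_adjacent_intervals int₁ int₂, integral_congr eq₁, integral_congr eq₂,
    intervalIntegral.integral_const_mul, intervalIntegral.integral_const_mul]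
  ring

theorem hasDerivAt_integral_separableKernel_mul_s3
    (hG : ∀ t s, G t s = if s ≤ t then c * φ s * ψ t else c * φ t * ψ s)
    (hφf : IntervalIntegrable (fun s => φ s * f s) volume 0 1)
    (hψf : IntervalIntegrable (fun s => ψ s * f s) volume 0 1)
    {t φ' ψ' : ℝ} (ht : t ∈ Ioo (0 : ℝ) 1) (hft : ContinuousAt f t)
    (hφ : HasDerivAt φ φ' t) (hψ : HasDerivAt ψ ψ' t) :
    HasDerivAt (fun t => ∫ s in (0 : ℝ)..1, G t s * f s)
      (c * (ψ' * (∫ s in (0 : ℝ)..t, φ s * f s) + φ' * ∫ s in t..(1 : ℝ), ψ s * f s)) t := by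
  have hnhds : Ioc (0 : ℝ) 1 ∈ 𝓝 t := Ioc_mem_nhds ht.1 ht.2
  have hmeas : ∀ {g : ℝ → ℝ}, IntervalIntegrable g volume 0 1 →
      StronglyMeasurableAtFilter g (𝓝 t) :=
    fun hg => ⟨_, hnhds, ((intervalIntegrable_iff_integrableOn_Ioc_of_le zero_le_one).1 hg).1⟩
  have ht' : t ∈ uIcc (0 : ℝ) 1 := by rw [uIcc_of_le zero_le_one]; exact Ioo_subset_Icc_self ht
  have hA : HasDerivAt (fun u => ∫ s in (0 : ℝ)..u, φ s * f s) (φ t * f t) t :=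
    integral_hasDerivAt_right (hφf.mono_set (uIcc_subset_uIcc_left ht')) (hmeas hφf)
      (hφ.continuousAt.mul hft)
  have hB : HasDerivAt (fun u => ∫ s in u..(1 : ℝ), ψ s * f s) (-(ψ t * f t)) t :=
    integral_hasDerivAt_left (hψf.mono_set (uIcc_subset_uIcc_right ht')) (hmeas hψf)
      (hψ.continuousAt.mul hft)
  refine (((hψ.mul hA).add (hφ.mul hB)).const_mul c).congr_of_eventuallyEq ?_ |>.congr_deriv
    (by ring)
  filter_upwards [Ioo_mem_nhds ht.1 ht.2] with u hu
  simp only [Pi.add_apply, Pi.mul_apply]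
  exact integral_separableKernel_mul_eq hG hφf hψf (Ioo_subset_Icc_self hu)

theorem tendsto_mul_deriv_integral_separableKernel_mul
    (hG : ∀ t s, G t s = if s ≤ t then c * φ s * ψ t else c * φ t * ψ s)
    (hφf : IntervalIntegrable (fun s => φ s * f s) volume 0 1)
    (hψf : IntervalIntegrable (fun s => ψ s * f s) volume 0 1)
    {w φ' ψ' : ℝ → ℝ} {a b : ℝ} (hf : ∀ t ∈ Ioo (0 : ℝ) 1, ContinuousAt f t)
    (hφ : ∀ t ∈ Ioo (0 : ℝ) 1, HasDerivAt φ (φ' t) t)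
    (hψ : ∀ t ∈ Ioo (0 : ℝ) 1, HasDerivAt ψ (ψ' t) t)
    (ha : Tendsto (fun t => w t * φ' t) (𝓝[>] 0) (𝓝 a))
    (hb : Tendsto (fun t => w t * ψ' t) (𝓝[>] 0) (𝓝 b)) :
    Tendsto (fun t => w t * deriv (fun t => ∫ s in (0 : ℝ)..1, G t s * f s) t) (𝓝[>] 0)
      (𝓝 (c * a * ∫ s in (0 : ℝ)..1, ψ s * f s)) := by
  have hlim := ((hb.mul (tendsto_primitive_nhdsGT_zero hφf)).add
    (ha.mul (tendsto_integral_nhdsGT_zero hψf))).const_mul c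
  rw [mul_zero, zero_add, ← mul_assoc] at hlim
  refine hlim.congr' ?_
  filter_upwards [Ioo_mem_nhdsGT (zero_lt_one' ℝ)] with t ht
  rw [(hasDerivAt_integral_separableKernel_mul_s3 hG hφf hψf ht (hf t ht) (hφ t ht) (hψ t ht)).deriv]
  ring

end SeparableKernel

theorem hasDerivAt_div_mul_rpow {α : ℝ} (b : ℝ) (hα : α ≠ 0) {t : ℝ} (ht : 0 < t) :
    HasDerivAt (fun s => b / α * s ^ α) (b * t ^ (α - 1)) t :=
  ((Real.hasDerivAt_rpow_const (Or.inl ht.ne')).const_mul (b / α)).congr_deriv (by field_simp)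

theorem tendsto_rpow_one_sub_mul_rpow_sub_one (α b : ℝ) :
    Tendsto (fun t : ℝ => t ^ (1 - α) * (b * t ^ (α - 1))) (𝓝[>] 0) (𝓝 b) := by
  refine tendsto_const_nhds.congr' ?_
  filter_upwards [self_mem_nhdsWithin] with t ht
  rw [mul_left_comm, ← Real.rpow_add ht, sub_add_sub_cancel', sub_self, Real.rpow_zero, mul_one]

theorem left_boundary_condition_general
    (α β : ℝ) (hα : α ∈ Set.Ioc (0:ℝ) 1) (hβ : β ∈ Set.Ioc (0:ℝ) 1)
    (γ δ η ζ : ℝ)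
    (d : ℝ)
    (G : ℝ → ℝ → ℝ)
    (hG : ∀ t s : ℝ, G t s = if s ≤ t
        then (1 / d) * (δ + (γ / α) * s ^ α) * (ζ + (η / α) * (1 - t ^ α))
        else (1 / d) * (δ + (γ / α) * t ^ α) * (ζ + (η / α) * (1 - s ^ α)))
    (h : ℝ → ℝ) (hh : ContinuousOn h (Set.Icc 0 1))
    (x : ℝ → ℝ) (hx : ∀ t : ℝ, x t = ∫ s in (0:ℝ)..1, G t s * h s * s ^ (β - 1))
    (L₀ : ℝ)
    (hL₀ : L₀ = (γ / d) * ∫ s in (0:ℝ)..1, (ζ + (η / α) * (1 - s ^ α)) * h s * s ^ (β - 1)) :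
    Filter.Tendsto (fun t : ℝ => t ^ (1 - α) * deriv x t)
      (nhdsWithin 0 (Set.Ioi (0:ℝ))) (nhds L₀) ∧
    γ * x 0 - δ * L₀ = 0 := by
  set φ : ℝ → ℝ := fun s => δ + γ / α * s ^ α
  set ψ : ℝ → ℝ := fun s => ζ + η / α * (1 - s ^ α)
  set f : ℝ → ℝ := fun s => h s * s ^ (β - 1)
  have hαne : α ≠ 0 := hα.1.ne'
  have hx' : x = fun t => ∫ s in (0 : ℝ)..1, G t s * f s :=
    funext fun t => by simp only [hx, f, mul_assoc]
  have hL : L₀ = 1 / d * γ * ∫ s in (0 : ℝ)..1, ψ s * f s := by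
    simp only [hL₀, ψ, f, mul_assoc, div_eq_mul_inv, one_mul, mul_comm γ]
  have hrpow : Continuous fun s : ℝ => s ^ α := Real.continuous_rpow_const hα.1.le
  have hf : IntervalIntegrable f volume 0 1 :=
    (intervalIntegrable_rpow' (by linarith [hβ.1])).continuousOn_mul
      (by rwa [uIcc_of_le zero_le_one])
  have hφf :=
    hf.continuousOn_mul (continuous_const.add (continuous_const.mul hrpow)).continuousOn (g := φ)
  have hψf := hf.continuousOn_mul
    (continuous_const.add (continuous_const.mul (continuous_const.sub hrpow))).continuousOn (g := ψ)
  have hφ (t : ℝ) (ht : t ∈ Ioo (0 : ℝ) 1) : HasDerivAt φ (γ * t ^ (α - 1)) t :=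
    (hasDerivAt_div_mul_rpow γ hαne ht.1).const_add δ
  have hψ (t : ℝ) (ht : t ∈ Ioo (0 : ℝ) 1) : HasDerivAt ψ (-η * t ^ (α - 1)) t := by
    refine ((hasDerivAt_div_mul_rpow η hαne ht.1).const_sub (ζ + η / α)).congr_deriv (by ring)
      |>.congr_of_eventuallyEq (.of_forall fun s => ?_)
    simp only [ψ]
    ring
  have hfc (t : ℝ) (ht : t ∈ Ioo (0 : ℝ) 1) : ContinuousAt f t :=
    (hh.continuousAt (Icc_mem_nhds ht.1 ht.2)).mul
      (Real.continuousAt_rpow_const _ _ (Or.inl ht.1.ne'))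
  refine ⟨?_, ?_⟩
  · rw [hL, hx']
    exact tendsto_mul_deriv_integral_separableKernel_mul hG hφf hψf hfc hφ hψ
      (tendsto_rpow_one_sub_mul_rpow_sub_one α γ) (tendsto_rpow_one_sub_mul_rpow_sub_one α (-η))
  · have hx₀ := integral_separableKernel_mul_eq hG hφf hψf (left_mem_Icc.2 zero_le_one)
    rw [← congrFun hx' 0, integral_same] at hx₀
    rw [hx₀, hL]
    simp only [Real.zero_rpow hαne]
    ring

/-- With the setup of the general Green's function problem, the limit
`L₀ = lim_{t→0⁺} t^{1−α} x′(t)` exists and equals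
`(γ/d) ∫₀¹ [ζ + (η/α)(1 − s^α)] h(s) s^{β−1} ds`, and `γ x(0) − δ L₀ = 0`. -/
theorem left_boundary_condition
    (α β : ℝ) (hα : α ∈ Set.Ioc (0:ℝ) 1) (hβ : β ∈ Set.Ioc (0:ℝ) 1)
    (γ δ η ζ : ℝ) (hγ : 0 ≤ γ) (hδ : 0 ≤ δ) (hη : 0 ≤ η) (hζ : 0 ≤ ζ)
    (d : ℝ) (hd : d = η * δ + γ * ζ + γ * η / α) (hdpos : 0 < d)
    (G : ℝ → ℝ → ℝ)
    (hG : ∀ t s : ℝ, G t s = if s ≤ t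
        then (1 / d) * (δ + (γ / α) * s ^ α) * (ζ + (η / α) * (1 - t ^ α))
        else (1 / d) * (δ + (γ / α) * t ^ α) * (ζ + (η / α) * (1 - s ^ α)))
    (h : ℝ → ℝ) (hh : ContinuousOn h (Set.Icc 0 1))
    (x : ℝ → ℝ) (hx : ∀ t : ℝ, x t = ∫ s in (0:ℝ)..1, G t s * h s * s ^ (β - 1))
    (L₀ : ℝ)
    (hL₀ : L₀ = (γ / d) * ∫ s in (0:ℝ)..1, (ζ + (η / α) * (1 - s ^ α)) * h s * s ^ (β - 1)) :
    Filter.Tendsto (fun t : ℝ => t ^ (1 - α) * deriv x t)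
      (nhdsWithin 0 (Set.Ioi (0:ℝ))) (nhds L₀) ∧
    γ * x 0 - δ * L₀ = 0 :=
  left_boundary_condition_general α β hα hβ γ δ η ζ d G hG h hh x hx L₀ hL₀
end

section
/- Let α, β ∈ (0,1], let G be the conjugate Green's function, and let h : [0,1] → ℝ be continuous. Define x(t) = ∫₀¹ G(t,s) h(s) s^{β−1} ds. Then x(0) = x(1) = 0, and for every t ∈ (0,1), x is differentiable at t, the function y(t) := t^{1−α} x′(t) is differentiable at t, and −t^{1−β} y′(t) = h(t). -/
/-!
Splitting the integral at `s = t` gives, for `t ∈ [0,1]`,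
`α x(t) = (1 - t^α) ∫₀ᵗ s^α w + t^α ∫ₜ¹ (1 - s^α) w` with `w(s) = h(s) s^{β-1}`.
The boundary values are read off this formula. Differentiating it, the terms coming from the
moving endpoints cancel, leaving `t^{1-α} x'(t) = ∫ₜ¹ (1 - s^α) w - ∫₀ᵗ s^α w`, whose derivative
is `-(1 - t^α) w(t) - t^α w(t) = -w(t) = -t^{β-1} h(t)`.
-/

open MeasureTheory Set intervalIntegral Topology

section IntervalIntegral

variable {E : Type*} [NormedAddCommGroup E] [NormedSpace ℝ E] [CompleteSpace E]
  {f : ℝ → E} {a b t : ℝ}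

theorem hasDerivAt_integral_right_of_continuousOn_Ioo (hf : IntervalIntegrable f volume a b)
    (hc : ContinuousOn f (Ioo a b)) (ht : t ∈ Ioo a b) :
    HasDerivAt (fun u => ∫ s in a..u, f s) (f t) t :=
  integral_hasDerivAt_right
    (hf.mono_set (uIcc_subset_uIcc left_mem_uIcc (Icc_subset_uIcc (Ioo_subset_Icc_self ht))))
    (hc.stronglyMeasurableAtFilter isOpen_Ioo t ht) (hc.continuousAt (Ioo_mem_nhds ht.1 ht.2))

theorem hasDerivAt_integral_left_of_continuousOn_Ioo (hf : IntervalIntegrable f volume a b)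
    (hc : ContinuousOn f (Ioo a b)) (ht : t ∈ Ioo a b) :
    HasDerivAt (fun u => ∫ s in u..b, f s) (-f t) t :=
  integral_hasDerivAt_left
    (hf.mono_set (uIcc_subset_uIcc (Icc_subset_uIcc (Ioo_subset_Icc_self ht)) right_mem_uIcc))
    (hc.stronglyMeasurableAtFilter isOpen_Ioo t ht) (hc.continuousAt (Ioo_mem_nhds ht.1 ht.2))

end IntervalIntegral

section RpowWeight

variable {α a b t : ℝ} {w : ℝ → ℝ}

theorem IntervalIntegrable.rpow_const_mul (hw : IntervalIntegrable w volume a b) (hα : 0 ≤ α) :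
    IntervalIntegrable (fun s => s ^ α * w s) volume a b :=
  hw.continuousOn_mul (Real.continuous_rpow_const hα).continuousOn

theorem IntervalIntegrable.one_sub_rpow_const_mul (hw : IntervalIntegrable w volume a b)
    (hα : 0 ≤ α) : IntervalIntegrable (fun s => (1 - s ^ α) * w s) volume a b :=
  hw.continuousOn_mul (continuous_const.sub (Real.continuous_rpow_const hα)).continuousOn

theorem hasDerivAt_integral_rpow_const_mul (hα : 0 ≤ α) (hw : IntervalIntegrable w volume a b)
    (hc : ContinuousOn w (Ioo a b)) (ht : t ∈ Ioo a b) :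
    HasDerivAt (fun u => ∫ s in a..u, s ^ α * w s) (t ^ α * w t) t :=
  hasDerivAt_integral_right_of_continuousOn_Ioo (hw.rpow_const_mul hα)
    ((Real.continuous_rpow_const hα).continuousOn.mul hc) ht

theorem hasDerivAt_integral_one_sub_rpow_const_mul (hα : 0 ≤ α)
    (hw : IntervalIntegrable w volume a b) (hc : ContinuousOn w (Ioo a b)) (ht : t ∈ Ioo a b) :
    HasDerivAt (fun u => ∫ s in u..b, (1 - s ^ α) * w s) (-((1 - t ^ α) * w t)) t :=
  hasDerivAt_integral_left_of_continuousOn_Ioo (hw.one_sub_rpow_const_mul hα)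
    ((continuous_const.sub (Real.continuous_rpow_const hα)).continuousOn.mul hc) ht

end RpowWeight

noncomputable def conjugateGreen (α t s : ℝ) : ℝ :=
  if s ≤ t then 1 / α * s ^ α * (1 - t ^ α) else 1 / α * t ^ α * (1 - s ^ α)

namespace conjugateGreen

variable {α t : ℝ} {w : ℝ → ℝ}

theorem integral_mul_eq (hα : 0 ≤ α) (hw : IntervalIntegrable w volume 0 1) (ht : t ∈ Icc 0 1) :
    ∫ s in 0..1, conjugateGreen α t s * w s =
      ((1 - t ^ α) * (∫ s in 0..t, s ^ α * w s) + t ^ α * ∫ s in t..1, (1 - s ^ α) * w s) / α := by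
  have ht' : t ∈ uIcc 0 1 := by rwa [uIcc_of_le zero_le_one]
  have hlower : EqOn (fun s => conjugateGreen α t s * w s)
      (fun s => (1 - t ^ α) / α * (s ^ α * w s)) (uIcc 0 t) := by
    intro s hs
    rw [uIcc_of_le ht.1] at hs
    simp only [conjugateGreen, if_pos hs.2]
    ring
  have hupper : EqOn (fun s => conjugateGreen α t s * w s)
      (fun s => t ^ α / α * ((1 - s ^ α) * w s)) (uIcc t 1) := by
    intro s hs
    rw [uIcc_of_le ht.2] at hs
    rcases hs.1.eq_or_lt with rfl | hts
    · simp only [conjugateGreen, le_refl, if_true]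
      ring
    · simp only [conjugateGreen, if_neg (not_le.2 hts)]
      ring
  have hint_lower : IntervalIntegrable (fun s => s ^ α * w s) volume 0 t :=
    (hw.rpow_const_mul hα).mono_set (uIcc_subset_uIcc left_mem_uIcc ht')
  have hint_upper : IntervalIntegrable (fun s => (1 - s ^ α) * w s) volume t 1 :=
    (hw.one_sub_rpow_const_mul hα).mono_set (uIcc_subset_uIcc ht' right_mem_uIcc)
  rw [← integral_add_adjacent_intervals
      ((hint_lower.const_mul _).congr (hlower.symm.mono uIoc_subset_uIcc))
      ((hint_upper.const_mul _).congr (hupper.symm.mono uIoc_subset_uIcc)),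
    integral_congr hlower, integral_congr hupper, intervalIntegral.integral_const_mul,
    intervalIntegral.integral_const_mul]
  ring

theorem hasDerivAt_integral_mul (hα : 0 < α) (hw : IntervalIntegrable w volume 0 1)
    (hc : ContinuousOn w (Ioo 0 1)) (ht : t ∈ Ioo 0 1) :
    HasDerivAt (fun u => ∫ s in 0..1, conjugateGreen α u s * w s)
      (t ^ (α - 1) * ((∫ s in t..1, (1 - s ^ α) * w s) - ∫ s in 0..t, s ^ α * w s)) t := by
  have hpow := Real.hasDerivAt_rpow_const (p := α) (Or.inl ht.1.ne')
  have hformula := (((hpow.const_sub 1).mul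
    (hasDerivAt_integral_rpow_const_mul hα.le hw hc ht)).add
    (hpow.mul (hasDerivAt_integral_one_sub_rpow_const_mul hα.le hw hc ht))).div_const α
  refine (hformula.congr_of_eventuallyEq ?_).congr_deriv ?_
  · filter_upwards [Ioo_mem_nhds ht.1 ht.2] with u hu
    exact integral_mul_eq hα.le hw (Ioo_subset_Icc_self hu)
  · rw [div_eq_iff hα.ne']
    ring

theorem hasDerivAt_rpow_mul_deriv_integral_mul (hα : 0 < α) (hw : IntervalIntegrable w volume 0 1)
    (hc : ContinuousOn w (Ioo 0 1)) (ht : t ∈ Ioo 0 1) :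
    HasDerivAt
      (fun u => u ^ (1 - α) * deriv (fun v => ∫ s in 0..1, conjugateGreen α v s * w s) u)
      (-w t) t := by
  have hy : (fun u => u ^ (1 - α) * deriv (fun v => ∫ s in 0..1, conjugateGreen α v s * w s) u)
      =ᶠ[𝓝 t] fun u => (∫ s in u..1, (1 - s ^ α) * w s) - ∫ s in 0..u, s ^ α * w s := by
    filter_upwards [Ioo_mem_nhds ht.1 ht.2] with u hu
    rw [(hasDerivAt_integral_mul hα hw hc hu).deriv, ← mul_assoc, ← Real.rpow_add hu.1]
    simp
  refine (((hasDerivAt_integral_one_sub_rpow_const_mul hα.le hw hc ht).sub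
    (hasDerivAt_integral_rpow_const_mul hα.le hw hc ht)).congr_of_eventuallyEq hy).congr_deriv ?_
  ring

end conjugateGreen

/-- With `α, β ∈ (0,1]`, `G` the conjugate Green's function, `h` continuous on
`[0,1]`, and `x(t) = ∫₀¹ G(t,s) h(s) s^{β−1} ds`, we have `x(0) = x(1) = 0` and, for every
`t ∈ (0,1)`, `x` is differentiable at `t`, `y(u) := u^{1−α} x′(u)` is differentiable at `t`,
and `−t^{1−β} y′(t) = h(t)`. -/
theorem conjugate_greens_function_solves_bvp
    (α β : ℝ) (hα : α ∈ Set.Ioc (0:ℝ) 1) (hβ : β ∈ Set.Ioc (0:ℝ) 1)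
    (G : ℝ → ℝ → ℝ)
    (hG : ∀ t s : ℝ, G t s = if s ≤ t
        then (1 / α) * s ^ α * (1 - t ^ α)
        else (1 / α) * t ^ α * (1 - s ^ α))
    (h : ℝ → ℝ) (hh : ContinuousOn h (Set.Icc 0 1))
    (x : ℝ → ℝ) (hx : ∀ t : ℝ, x t = ∫ s in (0:ℝ)..1, G t s * h s * s ^ (β - 1)) :
    x 0 = 0 ∧ x 1 = 0 ∧
    ∀ t ∈ Set.Ioo (0:ℝ) 1,
      DifferentiableAt ℝ x t ∧
      DifferentiableAt ℝ (fun u : ℝ => u ^ (1 - α) * deriv x u) t ∧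
      -(t ^ (1 - β)) * deriv (fun u : ℝ => u ^ (1 - α) * deriv x u) t = h t := by
  set w : ℝ → ℝ := fun s => h s * s ^ (β - 1)
  have hx' : x = fun t => ∫ s in 0..1, conjugateGreen α t s * w s := by
    funext t
    simp only [hx, hG, conjugateGreen, w, mul_assoc]
  have hw : IntervalIntegrable w volume 0 1 :=
    (intervalIntegrable_rpow' (by linarith [hβ.1])).continuousOn_mul
      (by rwa [uIcc_of_le zero_le_one])
  have hc : ContinuousOn w (Ioo 0 1) :=
    (hh.mono Ioo_subset_Icc_self).mul
      (continuousOn_id.rpow_const fun s hs => Or.inl hs.1.ne')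
  subst hx'
  refine ⟨?_, ?_, fun t ht => ⟨?_, ?_, ?_⟩⟩
  · beta_reduce
    rw [conjugateGreen.integral_mul_eq hα.1.le hw (left_mem_Icc.2 zero_le_one)]
    simp [Real.zero_rpow hα.1.ne']
  · beta_reduce
    rw [conjugateGreen.integral_mul_eq hα.1.le hw (right_mem_Icc.2 zero_le_one)]
    simp
  · exact (conjugateGreen.hasDerivAt_integral_mul hα.1 hw hc ht).differentiableAt
  · exact (conjugateGreen.hasDerivAt_rpow_mul_deriv_integral_mul hα.1 hw hc ht).differentiableAt
  · rw [(conjugateGreen.hasDerivAt_rpow_mul_deriv_integral_mul hα.1 hw hc ht).deriv, neg_mul_neg,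
      ← mul_assoc, mul_comm, ← mul_assoc, ← Real.rpow_add ht.1]
    simp
end

section
/- Let α ∈ (0,1], let γ, δ, η, ζ ≥ 0 with d := ηδ + γζ + γη/α > 0, and let G be the associated general Green's function. Define g₁(t) := min{ (αδ + γt^α)/(αδ + γ), (αζ + η(1 − t^α))/(αζ + η) }. Then for all t, s ∈ [0,1], g₁(t)·G(s,s) ≤ G(t,s) ≤ G(s,s). -/
/-!
With `u = s^α` and `v = t^α` in `[0,1]`, the Green's function is `G(t,s) = p(min u v) q(max u v) / d`
for the nonnegative affine maps `p(x) = δ + (γ/α) x` (increasing) and `q(x) = ζ + (η/α)(1 - x)`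
(decreasing). Hence `G(t,s)` differs from `G(s,s) = p(u) q(u) / d` only by replacing one factor,
say `q(u)`, with `q(v) ≤ q(u)`, which gives the upper bound. The two entries of `g₁(t)` are
`p(v)/p(1)` and `q(v)/q(0)`, and `q(v)/q(0) · q(u) ≤ q(v)` because `q(u) ≤ q(0)`; this gives the
lower bound.
-/

lemma div_mul_le_of_le_of_nonneg {a b c : ℝ} (ha : 0 ≤ a) (hab : a ≤ b) (hc : 0 ≤ c) :
    c / b * a ≤ c :=
  calc c / b * a = c * (a / b) := by ring
    _ ≤ c := mul_le_of_le_one_right hc (div_le_one_of_le₀ hab (ha.trans hab))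

/-- The abstract form of both bounds: `c * x` plays `G(s,s)` and `c * x'` plays `G(t,s)`. -/
lemma mul_bounds_of_le_div {c x x' x₀ g : ℝ} (hc : 0 ≤ c) (hx' : 0 ≤ x') (hx'x : x' ≤ x)
    (hxx₀ : x ≤ x₀) (hg : g ≤ x' / x₀) : g * (c * x) ≤ c * x' ∧ c * x' ≤ c * x := by
  have hx : 0 ≤ x := hx'.trans hx'x
  refine ⟨?_, mul_le_mul_of_nonneg_left hx'x hc⟩
  calc g * (c * x) ≤ x' / x₀ * (c * x) := mul_le_mul_of_nonneg_right hg (mul_nonneg hc hx)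
    _ = c * (x' / x₀ * x) := by ring
    _ ≤ c * x' := mul_le_mul_of_nonneg_left (div_mul_le_of_le_of_nonneg hx hxx₀ hx') hc

lemma mul_add_mul_div_mul_add {α : ℝ} (hα : α ≠ 0) (a b y : ℝ) :
    (α * a + b * y) / (α * a + b) = (a + b / α * y) / (a + b / α) := by
  rw [← mul_div_mul_left (a + b / α * y) (a + b / α) hα]
  congr 1 <;> field_simp

lemma rpow_mem_Icc_zero_one {x : ℝ} (hx : x ∈ Set.Icc (0 : ℝ) 1) {α : ℝ} (hα : 0 ≤ α) :
    x ^ α ∈ Set.Icc (0 : ℝ) 1 :=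
  ⟨Real.rpow_nonneg hx.1 α, Real.rpow_le_one hx.1 hx.2 hα⟩

theorem greens_function_bounds_general
    (α : ℝ) (hα : α ∈ Set.Ioc (0:ℝ) 1)
    (γ δ η ζ : ℝ) (hγ : 0 ≤ γ) (hδ : 0 ≤ δ) (hη : 0 ≤ η) (hζ : 0 ≤ ζ)
    (d : ℝ) (hdpos : 0 < d)
    (G : ℝ → ℝ → ℝ)
    (hG : ∀ t s : ℝ, G t s = if s ≤ t
        then (1 / d) * (δ + (γ / α) * s ^ α) * (ζ + (η / α) * (1 - t ^ α))
        else (1 / d) * (δ + (γ / α) * t ^ α) * (ζ + (η / α) * (1 - s ^ α)))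
    (g₁ : ℝ → ℝ)
    (hg₁ : ∀ t : ℝ, g₁ t = min ((α * δ + γ * t ^ α) / (α * δ + γ))
        ((α * ζ + η * (1 - t ^ α)) / (α * ζ + η))) :
    ∀ t ∈ Set.Icc (0:ℝ) 1, ∀ s ∈ Set.Icc (0:ℝ) 1,
      g₁ t * G s s ≤ G t s ∧ G t s ≤ G s s := by
  intro t ht s hs
  have hα0 : 0 < α := hα.1
  obtain ⟨hv0, hv1⟩ := rpow_mem_Icc_zero_one ht hα0.le
  obtain ⟨hu0, hu1⟩ := rpow_mem_Icc_zero_one hs hα0.le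
  have hg_p : g₁ t ≤ (δ + γ / α * t ^ α) / (δ + γ / α) := by
    rw [hg₁, ← mul_add_mul_div_mul_add hα0.ne']
    exact min_le_left _ _
  have hg_q : g₁ t ≤ (ζ + η / α * (1 - t ^ α)) / (ζ + η / α) := by
    rw [hg₁, ← mul_add_mul_div_mul_add hα0.ne']
    exact min_le_right _ _
  rw [hG t s, hG s s, if_pos le_rfl]
  split_ifs with hst
  · have huv : s ^ α ≤ t ^ α := Real.rpow_le_rpow hs.1 hst hα0.le
    refine mul_bounds_of_le_div (by positivity) ?_ ?_ ?_ hg_q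
    · have : 0 ≤ 1 - t ^ α := by linarith
      positivity
    · gcongr
    · have : 1 - s ^ α ≤ 1 := by linarith
      calc ζ + η / α * (1 - s ^ α) ≤ ζ + η / α * 1 := by gcongr
        _ = ζ + η / α := by ring
  · have huv : t ^ α ≤ s ^ α := Real.rpow_le_rpow ht.1 (le_of_not_ge hst) hα0.le
    have hq : 0 ≤ 1 / d * (ζ + η / α * (1 - s ^ α)) := by
      have : 0 ≤ 1 - s ^ α := by linarith
      positivity
    rw [mul_right_comm (1 / d) (δ + γ / α * t ^ α), mul_right_comm (1 / d) (δ + γ / α * s ^ α)]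
    refine mul_bounds_of_le_div hq (by positivity) (by gcongr) ?_ hg_p
    calc δ + γ / α * s ^ α ≤ δ + γ / α * 1 := by gcongr
      _ = δ + γ / α := by ring

/-- Bounds for the general Green's function:
`g₁(t)·G(s,s) ≤ G(t,s) ≤ G(s,s)` for all `t, s ∈ [0,1]`, where
`g₁(t) = min{(αδ + γt^α)/(αδ + γ), (αζ + η(1 − t^α))/(αζ + η)}`. -/
theorem greens_function_bounds
    (α : ℝ) (hα : α ∈ Set.Ioc (0:ℝ) 1)
    (γ δ η ζ : ℝ) (hγ : 0 ≤ γ) (hδ : 0 ≤ δ) (hη : 0 ≤ η) (hζ : 0 ≤ ζ)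
    (d : ℝ) (hd : d = η * δ + γ * ζ + γ * η / α) (hdpos : 0 < d)
    (G : ℝ → ℝ → ℝ)
    (hG : ∀ t s : ℝ, G t s = if s ≤ t
        then (1 / d) * (δ + (γ / α) * s ^ α) * (ζ + (η / α) * (1 - t ^ α))
        else (1 / d) * (δ + (γ / α) * t ^ α) * (ζ + (η / α) * (1 - s ^ α)))
    (g₁ : ℝ → ℝ)
    (hg₁ : ∀ t : ℝ, g₁ t = min ((α * δ + γ * t ^ α) / (α * δ + γ))
        ((α * ζ + η * (1 - t ^ α)) / (α * ζ + η))) :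
    ∀ t ∈ Set.Icc (0:ℝ) 1, ∀ s ∈ Set.Icc (0:ℝ) 1,
      g₁ t * G s s ≤ G t s ∧ G t s ≤ G s s :=
  greens_function_bounds_general α hα γ δ η ζ hγ hδ hη hζ d hdpos G hG g₁ hg₁
end

section
/- Let α ∈ (0,1], let γ, δ, η, ζ ≥ 0 with d := ηδ + γζ + γη/α > 0, let n ≥ 3 be an integer, let G be the associated general Green's function, let u(t,s) := (1/d)[δ + (γ/α)t^α][ζ + (η/α)(1 − s^α)], and let r := [ (αγζ + γη + αδη(n−1)^α) / ( (αδη + αγζ + γη)n^α − γη(n−1)^α + γη ) ]^{1/α}. Then for every s ∈ [0,1]: if s ≤ r, the minimum of G(t,s) over t ∈ [1/n, 1 − 1/n] equals u(s, 1 − 1/n) = (1/d)[δ + (γ/α)s^α][ζ + (η/α)(1 − (1 − 1/n)^α)], and if s ≥ r, that minimum equals u(1/n, s) = (1/d)[δ + (γ/α)(1/n)^α][ζ + (η/α)(1 − s^α)]. -/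
theorem greens_key_id (α γ δ η ζ N M x : ℝ) (hα : α ≠ 0) (hN : N ≠ 0) :
    α * α * N * ((δ + (γ / α) * x) * (ζ + (η / α) * (1 - M / N))
      - (δ + (γ / α) * N⁻¹) * (ζ + (η / α) * (1 - x)))
    = ((α * δ * η + α * γ * ζ + γ * η) * N - γ * η * M + γ * η) * x
      - (α * γ * ζ + γ * η + α * δ * η * M) := by
  field_simp
  ring

/-- With `u(t,s) = (1/d)[δ + (γ/α)t^α][ζ + (η/α)(1 − s^α)]` and `r` the constant
of the paper, for every `s ∈ [0,1]`: if `s ≤ r` then the minimum of `G(t,s)` over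
`t ∈ [1/n, 1 − 1/n]` equals `u(s, 1 − 1/n)`, and if `r ≤ s` then that minimum equals
`u(1/n, s)`. -/
theorem min_of_greens_function_on_interval
    (α : ℝ) (hα : α ∈ Set.Ioc (0:ℝ) 1)
    (γ δ η ζ : ℝ) (hγ : 0 ≤ γ) (hδ : 0 ≤ δ) (hη : 0 ≤ η) (hζ : 0 ≤ ζ)
    (d : ℝ) (hd : d = η * δ + γ * ζ + γ * η / α) (hdpos : 0 < d)
    (n : ℕ) (hn : 3 ≤ n)
    (G : ℝ → ℝ → ℝ)
    (hG : ∀ t s : ℝ, G t s = if s ≤ t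
        then (1 / d) * (δ + (γ / α) * s ^ α) * (ζ + (η / α) * (1 - t ^ α))
        else (1 / d) * (δ + (γ / α) * t ^ α) * (ζ + (η / α) * (1 - s ^ α)))
    (u : ℝ → ℝ → ℝ)
    (hu : ∀ t s : ℝ, u t s = (1 / d) * (δ + (γ / α) * t ^ α) * (ζ + (η / α) * (1 - s ^ α)))
    (r : ℝ)
    (hr : r = ((α * γ * ζ + γ * η + α * δ * η * ((n : ℝ) - 1) ^ α) /
        ((α * δ * η + α * γ * ζ + γ * η) * (n : ℝ) ^ α
          - γ * η * ((n : ℝ) - 1) ^ α + γ * η)) ^ (1 / α)) :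
    ∀ s ∈ Set.Icc (0:ℝ) 1,
      (s ≤ r → IsLeast ((fun t => G t s) '' Set.Icc (1 / (n : ℝ)) (1 - 1 / (n : ℝ)))
        (u s (1 - 1 / (n : ℝ)))) ∧
      (r ≤ s → IsLeast ((fun t => G t s) '' Set.Icc (1 / (n : ℝ)) (1 - 1 / (n : ℝ)))
        (u (1 / (n : ℝ)) s)) := by
  obtain ⟨hα0, hα1⟩ := hα
  intro s hs
  obtain ⟨hs0, hs1⟩ := hs
  have hn3 : (3:ℝ) ≤ (n:ℝ) := by exact_mod_cast hn
  have hnpos : (0:ℝ) < (n:ℝ) := by linarith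
  set a := 1 / (n:ℝ) with hadef
  set b := 1 - a with hbdef
  set N := (n:ℝ) ^ α with hNdef
  set M := ((n:ℝ) - 1) ^ α with hMdef
  set num := α * γ * ζ + γ * η + α * δ * η * M with hnumdef
  set den := (α * δ * η + α * γ * ζ + γ * η) * N - γ * η * M + γ * η with hdendef
  clear_value den num M N b a
  have ha0 : 0 < a := by rw [hadef]; positivity
  have ha3 : a ≤ 1/3 := by
    rw [hadef]
    exact one_div_le_one_div_of_le (by norm_num) hn3
  have hab : a ≤ b := by rw [hbdef]; linarith
  have hb1 : b ≤ 1 := by rw [hbdef]; linarith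
  have hb0 : 0 ≤ b := le_trans ha0.le hab
  have hNpos : 0 < N := by rw [hNdef]; exact Real.rpow_pos_of_pos hnpos α
  have hN1 : 1 ≤ N := by
    rw [hNdef]
    calc (1:ℝ) = 1 ^ α := (Real.one_rpow α).symm
    _ ≤ (n:ℝ) ^ α := Real.rpow_le_rpow zero_le_one (by linarith) hα0.le
  have hM1 : 1 ≤ M := by
    rw [hMdef]
    calc (1:ℝ) = 1 ^ α := (Real.one_rpow α).symm
    _ ≤ ((n:ℝ) - 1) ^ α := Real.rpow_le_rpow zero_le_one (by linarith) hα0.le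
  have hMN : M ≤ N := by
    rw [hMdef, hNdef]
    exact Real.rpow_le_rpow (by linarith) (by linarith) hα0.le
  have haα : a ^ α = N⁻¹ := by
    rw [hadef, hNdef, one_div, Real.inv_rpow hnpos.le]
  have hbα : b ^ α = M / N := by
    have hb' : b = ((n:ℝ) - 1) / n := by
      rw [hbdef, hadef]; field_simp
    rw [hb', hMdef, hNdef, Real.div_rpow (by linarith) hnpos.le]
  have hαd : 0 < α * δ * η + α * γ * ζ + γ * η := by
    have h1 : 0 < α * d := mul_pos hα0 hdpos
    have h2 : α * d = α * δ * η + α * γ * ζ + γ * η := by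
      rw [hd]; field_simp
    linarith
  have hden : 0 < den := by
    rw [hdendef]
    linarith [mul_nonneg (mul_nonneg (mul_nonneg hα0.le hδ) hη) (sub_nonneg.2 hN1),
      mul_nonneg (mul_nonneg (mul_nonneg hα0.le hγ) hζ) (sub_nonneg.2 hN1),
      mul_nonneg (mul_nonneg hγ hη) (sub_nonneg.2 hMN)]
  have hnum0 : 0 ≤ num := by
    rw [hnumdef]
    linarith [mul_nonneg (mul_nonneg hα0.le hγ) hζ, mul_nonneg hγ hη,
      mul_nonneg (mul_nonneg (mul_nonneg hα0.le hδ) hη) (by linarith : (0:ℝ) ≤ M)]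
  have hrr : r = (num / den) ^ (1 / α) := hr
  have hrα : r ^ α = num / den := by
    rw [hrr, ← Real.rpow_mul (div_nonneg hnum0 hden.le), one_div,
      inv_mul_cancel₀ hα0.ne', Real.rpow_one]
  have hr0 : 0 ≤ r := by
    rw [hrr]; exact Real.rpow_nonneg (div_nonneg hnum0 hden.le) _
  have hid : ∀ x : ℝ, α * α * N * ((δ + (γ / α) * x) * (ζ + (η / α) * (1 - M / N))
      - (δ + (γ / α) * N⁻¹) * (ζ + (η / α) * (1 - x))) = den * x - num := by
    intro x
    rw [hdendef, hnumdef]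
    exact greens_key_id α γ δ η ζ N M x hα0.ne' hNpos.ne'
  have hα2N : 0 < α * α * N := by positivity
  have hK1 : ∀ x : ℝ, den * x ≤ num →
      (δ + (γ / α) * x) * (ζ + (η / α) * (1 - M / N))
        ≤ (δ + (γ / α) * N⁻¹) * (ζ + (η / α) * (1 - x)) := by
    intro x hx
    by_contra hc
    push_neg at hc
    have h3 := mul_pos hα2N (sub_pos.2 hc)
    rw [hid x] at h3
    linarith
  have hK2 : ∀ x : ℝ, num ≤ den * x →
      (δ + (γ / α) * N⁻¹) * (ζ + (η / α) * (1 - x))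
        ≤ (δ + (γ / α) * x) * (ζ + (η / α) * (1 - M / N)) := by
    intro x hx
    by_contra hc
    push_neg at hc
    have h3 : α * α * N * ((δ + (γ / α) * x) * (ζ + (η / α) * (1 - M / N))
        - (δ + (γ / α) * N⁻¹) * (ζ + (η / α) * (1 - x))) < 0 :=
      mul_neg_of_pos_of_neg hα2N (sub_neg.2 hc)
    rw [hid x] at h3
    linarith
  have hrb : r ≤ b := by
    have h1 : num / den ≤ M / N := by
      rw [div_le_div_iff₀ hden hNpos, hnumdef, hdendef]
      linarith [mul_nonneg (sub_nonneg.2 hM1)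
          (mul_nonneg (mul_nonneg (mul_nonneg hα0.le hγ) hζ) hNpos.le),
        mul_nonneg (sub_nonneg.2 hM1) (mul_nonneg (mul_nonneg hγ hη) (sub_nonneg.2 hMN))]
    by_contra hc
    push_neg at hc
    have h2 := Real.rpow_lt_rpow hb0 hc hα0
    rw [hrα, hbα] at h2
    linarith
  have har : a ≤ r := by
    have h1 : N⁻¹ ≤ num / den := by
      rw [inv_eq_one_div, div_le_div_iff₀ hNpos hden, hnumdef, hdendef]
      linarith [mul_nonneg (sub_nonneg.2 hM1)
          (mul_nonneg (mul_nonneg (mul_nonneg hα0.le hδ) hη) hNpos.le),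
        mul_nonneg (sub_nonneg.2 hM1) (mul_nonneg hγ hη)]
    by_contra hc
    push_neg at hc
    have h2 := Real.rpow_lt_rpow hr0 hc hα0
    rw [hrα, haα] at h2
    linarith
  have hd1 : (0:ℝ) ≤ 1 / d := by positivity
  have hγα : (0:ℝ) ≤ γ / α := by positivity
  have hηα : (0:ℝ) ≤ η / α := by positivity
  have hsα0 : 0 ≤ s ^ α := Real.rpow_nonneg hs0 α
  have hsα1 : s ^ α ≤ 1 := Real.rpow_le_one hs0 hs1 hα0.le
  have hPs : 0 ≤ δ + (γ / α) * s ^ α := by linarith [mul_nonneg hγα hsα0]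
  have hQs : 0 ≤ ζ + (η / α) * (1 - s ^ α) := by
    linarith [mul_nonneg hηα (sub_nonneg.2 hsα1)]
  have hub : u s b = (1 / d) * (δ + (γ / α) * s ^ α) * (ζ + (η / α) * (1 - M / N)) := by
    rw [hu, hbα]
  have hua : u a s = (1 / d) * (δ + (γ / α) * N⁻¹) * (ζ + (η / α) * (1 - s ^ α)) := by
    rw [hu, haα]
  have hKey1 : s ≤ r → u s b ≤ u a s := by
    intro hsr
    have hx : den * s ^ α ≤ num := by
      have h5 := Real.rpow_le_rpow hs0 hsr hα0.le
      rw [hrα] at h5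
      rw [mul_comm]
      exact (le_div_iff₀ hden).mp h5
    have h := hK1 _ hx
    rw [hub, hua]
    linarith [mul_le_mul_of_nonneg_left h hd1]
  have hKey2 : r ≤ s → u a s ≤ u s b := by
    intro hrs
    have hx : num ≤ den * s ^ α := by
      have h5 := Real.rpow_le_rpow hr0 hrs hα0.le
      rw [hrα] at h5
      rw [mul_comm]
      exact (div_le_iff₀ hden).mp h5
    have h := hK2 _ hx
    rw [hub, hua]
    linarith [mul_le_mul_of_nonneg_left h hd1]
  have hLB1 : ∀ t : ℝ, 0 ≤ t → t ≤ b →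
      u s b ≤ (1 / d) * (δ + (γ / α) * s ^ α) * (ζ + (η / α) * (1 - t ^ α)) := by
    intro t ht0 htb
    have h2 : t ^ α ≤ M / N := by
      have h5 := Real.rpow_le_rpow ht0 htb hα0.le
      rwa [hbα] at h5
    have hc : 0 ≤ 1 / d * (δ + (γ / α) * s ^ α) := mul_nonneg hd1 hPs
    have hQ : ζ + (η / α) * (1 - M / N) ≤ ζ + (η / α) * (1 - t ^ α) := by
      linarith [mul_nonneg hηα (sub_nonneg.2 h2)]
    rw [hub]
    linarith [mul_le_mul_of_nonneg_left hQ hc]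
  have hLB2 : ∀ t : ℝ, a ≤ t →
      u a s ≤ (1 / d) * (δ + (γ / α) * t ^ α) * (ζ + (η / α) * (1 - s ^ α)) := by
    intro t hat
    have h2 : N⁻¹ ≤ t ^ α := by
      have h5 := Real.rpow_le_rpow ha0.le hat hα0.le
      rwa [haα] at h5
    have hP : δ + (γ / α) * N⁻¹ ≤ δ + (γ / α) * t ^ α := by
      linarith [mul_nonneg hγα (sub_nonneg.2 h2)]
    rw [hua]
    linarith [mul_le_mul_of_nonneg_right (mul_le_mul_of_nonneg_left hP hd1) hQs]
  constructor
  · intro hsr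
    have hsb : s ≤ b := hsr.trans hrb
    constructor
    · exact ⟨b, ⟨hab, le_refl b⟩, by show G b s = u s b; rw [hG, hu, if_pos hsb]⟩
    · rintro y ⟨t, ⟨hta, htb⟩, rfl⟩
      simp only
      rw [hG]
      split_ifs with hst
      · exact hLB1 t (le_trans ha0.le hta) htb
      · exact le_trans (hKey1 hsr) (hLB2 t hta)
  · intro hrs
    have has : a ≤ s := har.trans hrs
    constructor
    · refine ⟨a, ⟨le_refl a, hab⟩, ?_⟩
      show G a s = u a s
      by_cases hcase : s ≤ a
      · have hsa : s = a := le_antisymm hcase has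
        rw [hG, hu, if_pos hcase, hsa]
      · rw [hG, hu, if_neg hcase]
    · rintro y ⟨t, ⟨hta, htb⟩, rfl⟩
      simp only
      rw [hG]
      split_ifs with hst
      · exact le_trans (hKey2 hrs) (hLB1 t (le_trans ha0.le hta) htb)
      · exact hLB2 t hta
end

section
/- Let α ∈ (0,1], let γ, δ, η, ζ ≥ 0 with d := ηδ + γζ + γη/α > 0, let n ≥ 3 be an integer, let G be the associated general Green's function, and let r := [ (αγζ + γη + αδη(n−1)^α) / ( (αδη + αγζ + γη)n^α − γη(n−1)^α + γη ) ]^{1/α}. Define g₂(s) := (αζ + η(1 − (1 − 1/n)^α)) / (αζ + η(1 − s^α)) for s ∈ [0,r], and g₂(s) := (αδ + γ(1/n)^α) / (αδ + γs^α) for s ∈ [r,1]. Then for every s ∈ [0,1], min over t ∈ [1/n, 1 − 1/n] of G(t,s) is ≥ g₂(s)·G(s,s). -/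
private lemma key_aux (α γ δ η ζ p q x : ℝ) (hα0 : 0 < α) :
    α^2 * ((δ + γ/α*p) * (ζ + η/α*(1 - x)) -
      (δ + γ/α*x) * (ζ + η/α*(1 - q))) =
    (α*γ*ζ*p + γ*η*p + α*δ*η*q) - (α*η*δ + γ*η*p + α*γ*ζ + γ*η - γ*η*q) * x := by
  field_simp; ring

set_option maxHeartbeats 2000000 in
/-- With `r` the constant of the paper and `g₂` the piecewise function
`g₂(s) = (αζ + η(1 − (1 − 1/n)^α))/(αζ + η(1 − s^α))` for `s ∈ [0,r]` and
`g₂(s) = (αδ + γ(1/n)^α)/(αδ + γs^α)` for `s ∈ [r,1]`, for every `s ∈ [0,1]` the minimum of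
`G(t,s)` over `t ∈ [1/n, 1 − 1/n]` is at least `g₂(s)·G(s,s)`. -/
theorem greens_function_lower_bound_g2
    (α : ℝ) (hα : α ∈ Set.Ioc (0:ℝ) 1)
    (γ δ η ζ : ℝ) (hγ : 0 ≤ γ) (hδ : 0 ≤ δ) (hη : 0 ≤ η) (hζ : 0 ≤ ζ)
    (d : ℝ) (hd : d = η * δ + γ * ζ + γ * η / α) (hdpos : 0 < d)
    (n : ℕ) (hn : 3 ≤ n)
    (G : ℝ → ℝ → ℝ)
    (hG : ∀ t s : ℝ, G t s = if s ≤ t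
        then (1 / d) * (δ + (γ / α) * s ^ α) * (ζ + (η / α) * (1 - t ^ α))
        else (1 / d) * (δ + (γ / α) * t ^ α) * (ζ + (η / α) * (1 - s ^ α)))
    (r : ℝ)
    (hr : r = ((α * γ * ζ + γ * η + α * δ * η * ((n : ℝ) - 1) ^ α) /
        ((α * δ * η + α * γ * ζ + γ * η) * (n : ℝ) ^ α
          - γ * η * ((n : ℝ) - 1) ^ α + γ * η)) ^ (1 / α))
    (g₂ : ℝ → ℝ)
    (hg₂ : ∀ s : ℝ, g₂ s = if s ≤ r
        then (α * ζ + η * (1 - (1 - 1 / (n : ℝ)) ^ α)) / (α * ζ + η * (1 - s ^ α))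
        else (α * δ + γ * (1 / (n : ℝ)) ^ α) / (α * δ + γ * s ^ α)) :
    ∀ s ∈ Set.Icc (0:ℝ) 1, ∀ t ∈ Set.Icc (1 / (n : ℝ)) (1 - 1 / (n : ℝ)),
      g₂ s * G s s ≤ G t s := by
  obtain ⟨hα0, hα1⟩ := hα
  intro s hs t ht
  obtain ⟨hs0, hs1⟩ := hs
  obtain ⟨ht1, ht2⟩ := ht
  have hn3 : (3:ℝ) ≤ (n:ℝ) := by exact_mod_cast hn
  have hn0 : (0:ℝ) < (n:ℝ) := by linarith
  have hinv0 : 0 < 1/(n:ℝ) := by positivity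
  have hinv1 : 1/(n:ℝ) ≤ 1 := by
    rw [div_le_one hn0]; linarith
  have ht0 : 0 < t := lt_of_lt_of_le hinv0 ht1
  have ht1' : t ≤ 1 := by linarith
  set p := (1/(n:ℝ)) ^ α with hp
  set q := (1 - 1/(n:ℝ)) ^ α with hq
  set u := ((n:ℝ)) ^ α with hu
  have hupos : 0 < u := Real.rpow_pos_of_pos hn0 α
  have hppos : 0 < p := Real.rpow_pos_of_pos hinv0 α
  have hp1 : p ≤ 1 := Real.rpow_le_one hinv0.le hinv1 hα0.le
  have hq0 : 0 ≤ q := Real.rpow_nonneg (by linarith) α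
  have hq1 : q ≤ 1 := Real.rpow_le_one (by linarith) (by linarith) hα0.le
  have hpu : p * u = 1 := by
    rw [hp, hu, ← Real.mul_rpow (by positivity) hn0.le,
      one_div_mul_cancel hn0.ne', Real.one_rpow]
  have hmul : (1 - 1/(n:ℝ)) * (n:ℝ) = (n:ℝ) - 1 := by field_simp
  have hqu : q * u = ((n:ℝ) - 1) ^ α := by
    rw [hq, hu, ← Real.mul_rpow (by linarith) hn0.le, hmul]
  have hsα0 : 0 ≤ s ^ α := Real.rpow_nonneg hs0 α
  have hsα1 : s ^ α ≤ 1 := Real.rpow_le_one hs0 hs1 hα0.le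
  have htα1 : t ^ α ≤ 1 := Real.rpow_le_one ht0.le ht1' hα0.le
  have htαp : p ≤ t ^ α := Real.rpow_le_rpow hinv0.le ht1 hα0.le
  have htαq : t ^ α ≤ q := Real.rpow_le_rpow ht0.le ht2 hα0.le
  set K : ℝ := α*γ*ζ*p + γ*η*p + α*δ*η*q with hK
  set C : ℝ := α*η*δ + γ*η*p + α*γ*ζ + γ*η - γ*η*q with hC
  have hK0 : 0 ≤ K := by
    have h1 : 0 ≤ α*γ*ζ*p := mul_nonneg (mul_nonneg (mul_nonneg hα0.le hγ) hζ) hppos.le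
    have h2 : 0 ≤ γ*η*p := mul_nonneg (mul_nonneg hγ hη) hppos.le
    have h3 : 0 ≤ α*δ*η*q := mul_nonneg (mul_nonneg (mul_nonneg hα0.le hδ) hη) hq0
    rw [hK]; linarith
  have hαd : 0 < α*(η*δ) + α*(γ*ζ) + γ*η := by
    have h := mul_pos hα0 hdpos
    rw [hd] at h
    have h2 : α * (η * δ + γ * ζ + γ * η / α) = α*(η*δ) + α*(γ*ζ) + γ*η := by
      field_simp
    linarith [h2 ▸ h]
  have hC0 : 0 < C := by
    have ha : 0 ≤ α*(η*δ) := mul_nonneg hα0.le (mul_nonneg hη hδ)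
    have hb : 0 ≤ α*(γ*ζ) := mul_nonneg hα0.le (mul_nonneg hγ hζ)
    have hc : 0 ≤ γ*η := mul_nonneg hγ hη
    have h1 : 0 ≤ α*(η*δ) * (1 - p) := mul_nonneg ha (by linarith)
    have h2 : 0 ≤ α*(γ*ζ) * (1 - p) := mul_nonneg hb (by linarith)
    have h3 : 0 ≤ γ*η * (1 - q) := mul_nonneg hc (by linarith)
    have h4 : 0 < p * (α*(η*δ) + α*(γ*ζ) + γ*η) := mul_pos hppos hαd
    rw [hC]; nlinarith
  have hrKC : r = (K/C) ^ (1/α) := by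
    rw [hr]
    congr 1
    rw [← hqu]
    have hnum : α*γ*ζ + γ*η + α*δ*η*(q*u) = u*K := by
      rw [hK]; linear_combination (-(α*γ*ζ + γ*η)) * hpu
    have hden : (α*δ*η + α*γ*ζ + γ*η)*u - γ*η*(q*u) + γ*η = u*C := by
      rw [hC]; linear_combination (-(γ*η)) * hpu
    rw [hnum, hden, mul_div_mul_left K C hupos.ne']
  have hr0 : 0 ≤ r := by
    rw [hrKC]; positivity
  have hrα : r ^ α = K / C := by
    rw [hrKC, ← Real.rpow_mul (div_nonneg hK0 hC0.le), one_div_mul_cancel hα0.ne',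
      Real.rpow_one]
  have hγα : 0 ≤ γ/α := div_nonneg hγ hα0.le
  have hηα : 0 ≤ η/α := div_nonneg hη hα0.le
  have hA : 0 ≤ δ + γ/α * s ^ α := add_nonneg hδ (mul_nonneg hγα hsα0)
  have hB : 0 ≤ ζ + η/α * (1 - s ^ α) := add_nonneg hζ (mul_nonneg hηα (by linarith))
  have hBt : 0 ≤ ζ + η/α * (1 - t ^ α) := add_nonneg hζ (mul_nonneg hηα (by linarith))
  have hAt : 0 ≤ δ + γ/α * t ^ α :=
    add_nonneg hδ (mul_nonneg hγα (Real.rpow_nonneg ht0.le α))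
  have hd1 : (0:ℝ) < 1/d := by positivity
  have key : α^2 * ((δ + γ/α*p) * (ζ + η/α*(1 - s ^ α)) -
      (δ + γ/α*(s ^ α)) * (ζ + η/α*(1 - q))) = K - C * s ^ α := by
    rw [hK, hC]; exact key_aux α γ δ η ζ p q (s ^ α) hα0
  have hGts_nonneg : 0 ≤ G t s := by
    rw [hG t s]
    split_ifs with h
    · exact mul_nonneg (mul_nonneg hd1.le hA) hBt
    · exact mul_nonneg (mul_nonneg hd1.le hAt) hB
  by_cases hsr : s ≤ r
  · -- first branch of g₂
    have hsαr : s ^ α ≤ r ^ α := Real.rpow_le_rpow hs0 hsr hα0.le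
    have hx : C * s ^ α ≤ K := by
      rw [hrα] at hsαr
      calc C * s ^ α ≤ C * (K / C) := by
            exact mul_le_mul_of_nonneg_left hsαr hC0.le
        _ = K := by field_simp
    by_cases hz : α * ζ + η * (1 - s ^ α) = 0
    · rw [hg₂ s, if_pos hsr, hz, div_zero, zero_mul]
      exact hGts_nonneg
    · have hzpos : 0 < α * ζ + η * (1 - s ^ α) := by
        rcases lt_or_eq_of_le (by linarith [mul_nonneg hη (sub_nonneg.2 hsα1), mul_nonneg hα0.le hζ] :
          (0:ℝ) ≤ α * ζ + η * (1 - s ^ α)) with h | h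
        · exact h
        · exact absurd h.symm hz
      by_cases hst : s ≤ t
      · rw [hg₂ s, if_pos hsr, hG t s, if_pos hst, hG s s, if_pos le_rfl]
        have hls : (α * ζ + η * (1 - q)) / (α * ζ + η * (1 - s ^ α)) *
            (1 / d * (δ + γ / α * s ^ α) * (ζ + η / α * (1 - s ^ α))) =
            1/d * ((δ + γ/α * s ^ α) * (ζ + η/α * (1 - q))) := by
          field_simp
        rw [hls]
        calc 1/d * ((δ + γ/α * s ^ α) * (ζ + η/α * (1 - q)))
            ≤ 1/d * ((δ + γ/α * s ^ α) * (ζ + η/α * (1 - t ^ α))) := by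
              apply mul_le_mul_of_nonneg_left _ hd1.le
              apply mul_le_mul_of_nonneg_left _ hA
              linarith [mul_nonneg hηα (sub_nonneg.2 htαq)]
          _ = 1 / d * (δ + γ / α * s ^ α) * (ζ + η / α * (1 - t ^ α)) := by ring
      · rw [hg₂ s, if_pos hsr, hG t s, if_neg hst, hG s s, if_pos le_rfl]
        have hls : (α * ζ + η * (1 - q)) / (α * ζ + η * (1 - s ^ α)) *
            (1 / d * (δ + γ / α * s ^ α) * (ζ + η / α * (1 - s ^ α))) =
            1/d * ((δ + γ/α * s ^ α) * (ζ + η/α * (1 - q))) := by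
          field_simp
        rw [hls]
        have h1 : (δ + γ/α * s ^ α) * (ζ + η/α * (1 - q)) ≤
            (δ + γ/α * p) * (ζ + η/α * (1 - s ^ α)) := by
          have hα2 : (0:ℝ) < α^2 := pow_pos hα0 2
          have h2 : 0 ≤ K - C * s ^ α := by linarith
          have h3 : 0 ≤ α^2 * ((δ + γ/α*p) * (ζ + η/α*(1 - s ^ α)) -
              (δ + γ/α*(s ^ α)) * (ζ + η/α*(1 - q))) := by rw [key]; exact h2
          have h4 := (mul_nonneg_iff_of_pos_left hα2).mp h3
          linarith
        have h2 : (δ + γ/α * p) * (ζ + η/α * (1 - s ^ α)) ≤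
            (δ + γ/α * t ^ α) * (ζ + η/α * (1 - s ^ α)) := by
          apply mul_le_mul_of_nonneg_right _ hB
          linarith [mul_nonneg hγα (sub_nonneg.2 htαp)]
        calc 1/d * ((δ + γ/α * s ^ α) * (ζ + η/α * (1 - q)))
            ≤ 1/d * ((δ + γ/α * t ^ α) * (ζ + η/α * (1 - s ^ α))) := by
              apply mul_le_mul_of_nonneg_left _ hd1.le
              linarith
          _ = 1 / d * (δ + γ / α * t ^ α) * (ζ + η / α * (1 - s ^ α)) := by ring
  · -- second branch of g₂
    have hrs : r < s := not_le.1 hsr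
    have hspos : 0 < s := lt_of_le_of_lt hr0 hrs
    have hsαpos : 0 < s ^ α := Real.rpow_pos_of_pos hspos α
    have hsαr : r ^ α ≤ s ^ α := Real.rpow_le_rpow hr0 hrs.le hα0.le
    have hx : K ≤ C * s ^ α := by
      rw [hrα] at hsαr
      calc K = C * (K / C) := by field_simp
        _ ≤ C * s ^ α := mul_le_mul_of_nonneg_left hsαr hC0.le
    have hγδ : 0 < δ ∨ 0 < γ := by
      by_contra hcon
      push_neg at hcon
      obtain ⟨h1, h2⟩ := hcon
      have hδ0 : δ = 0 := le_antisymm h1 hδ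
      have hγ0 : γ = 0 := le_antisymm h2 hγ
      rw [hd, hδ0, hγ0] at hdpos
      simp at hdpos
    have hden2 : 0 < α * δ + γ * s ^ α := by
      rcases hγδ with h | h
      · have : 0 ≤ γ * s ^ α := mul_nonneg hγ hsα0
        linarith [mul_pos hα0 h]
      · have : 0 ≤ α * δ := mul_nonneg hα0.le hδ
        linarith [mul_pos h hsαpos]
    by_cases hst : s ≤ t
    · rw [hg₂ s, if_neg hsr, hG t s, if_pos hst, hG s s, if_pos le_rfl]
      have hls : (α * δ + γ * p) / (α * δ + γ * s ^ α) *
          (1 / d * (δ + γ / α * s ^ α) * (ζ + η / α * (1 - s ^ α))) =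
          1/d * ((δ + γ/α * p) * (ζ + η/α * (1 - s ^ α))) := by
        field_simp
      rw [hls]
      have h1 : (δ + γ/α * p) * (ζ + η/α * (1 - s ^ α)) ≤
          (δ + γ/α * s ^ α) * (ζ + η/α * (1 - q)) := by
        have hα2 : (0:ℝ) < α^2 := pow_pos hα0 2
        have h2 : 0 ≤ C * s ^ α - K := by linarith
        have h3 : 0 ≤ α^2 * ((δ + γ/α*(s ^ α)) * (ζ + η/α*(1 - q)) -
            (δ + γ/α*p) * (ζ + η/α*(1 - s ^ α))) := by
          have : α^2 * ((δ + γ/α*(s ^ α)) * (ζ + η/α*(1 - q)) -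
              (δ + γ/α*p) * (ζ + η/α*(1 - s ^ α))) = -(α^2 * ((δ + γ/α*p) * (ζ + η/α*(1 - s ^ α)) -
              (δ + γ/α*(s ^ α)) * (ζ + η/α*(1 - q)))) := by ring
          rw [this, key]
          linarith
        have h4 := (mul_nonneg_iff_of_pos_left hα2).mp h3
        linarith
      have h2 : (δ + γ/α * s ^ α) * (ζ + η/α * (1 - q)) ≤
          (δ + γ/α * s ^ α) * (ζ + η/α * (1 - t ^ α)) := by
        apply mul_le_mul_of_nonneg_left _ hA
        linarith [mul_nonneg hηα (sub_nonneg.2 htαq)]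
      calc 1/d * ((δ + γ/α * p) * (ζ + η/α * (1 - s ^ α)))
          ≤ 1/d * ((δ + γ/α * s ^ α) * (ζ + η/α * (1 - t ^ α))) := by
            apply mul_le_mul_of_nonneg_left _ hd1.le
            linarith
        _ = 1 / d * (δ + γ / α * s ^ α) * (ζ + η / α * (1 - t ^ α)) := by ring
    · rw [hg₂ s, if_neg hsr, hG t s, if_neg hst, hG s s, if_pos le_rfl]
      have hls : (α * δ + γ * p) / (α * δ + γ * s ^ α) *
          (1 / d * (δ + γ / α * s ^ α) * (ζ + η / α * (1 - s ^ α))) =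
          1/d * ((δ + γ/α * p) * (ζ + η/α * (1 - s ^ α))) := by
        field_simp
      rw [hls]
      calc 1/d * ((δ + γ/α * p) * (ζ + η/α * (1 - s ^ α)))
          ≤ 1/d * ((δ + γ/α * t ^ α) * (ζ + η/α * (1 - s ^ α))) := by
            apply mul_le_mul_of_nonneg_left _ hd1.le
            apply mul_le_mul_of_nonneg_right _ hB
            linarith [mul_nonneg hγα (sub_nonneg.2 htαp)]
        _ = 1 / d * (δ + γ / α * t ^ α) * (ζ + η / α * (1 - s ^ α)) := by ring
end

section
/- Let α ∈ (0,1], let γ, δ, η, ζ ≥ 0 with d := ηδ + γζ + γη/α > 0, let n ≥ 3 be an integer, and let G be the associated general Green's function. Define the constant g₃ := min{ (αζ + η(1 − (1 − 1/n)^α))/(αζ + η), (αδ + γ(1/n)^α)/(αδ + γ) }. Then g₃ > 0 and for every s ∈ [0,1], min over t ∈ [1/n, 1 − 1/n] of G(t,s) is ≥ g₃·G(s,s). -/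
set_option maxHeartbeats 1000000 in
/-- With the constant
`g₃ = min{(αζ + η(1 − (1 − 1/n)^α))/(αζ + η), (αδ + γ(1/n)^α)/(αδ + γ)}`, we have `g₃ > 0`
and, for every `s ∈ [0,1]`, the minimum of `G(t,s)` over `t ∈ [1/n, 1 − 1/n]` is at least
`g₃·G(s,s)`. -/
theorem greens_function_lower_bound_g3
    (α : ℝ) (hα : α ∈ Set.Ioc (0:ℝ) 1)
    (γ δ η ζ : ℝ) (hγ : 0 ≤ γ) (hδ : 0 ≤ δ) (hη : 0 ≤ η) (hζ : 0 ≤ ζ)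
    (d : ℝ) (hd : d = η * δ + γ * ζ + γ * η / α) (hdpos : 0 < d)
    (n : ℕ) (hn : 3 ≤ n)
    (G : ℝ → ℝ → ℝ)
    (hG : ∀ t s : ℝ, G t s = if s ≤ t
        then (1 / d) * (δ + (γ / α) * s ^ α) * (ζ + (η / α) * (1 - t ^ α))
        else (1 / d) * (δ + (γ / α) * t ^ α) * (ζ + (η / α) * (1 - s ^ α)))
    (g₃ : ℝ)
    (hg₃ : g₃ = min ((α * ζ + η * (1 - (1 - 1 / (n : ℝ)) ^ α)) / (α * ζ + η))
        ((α * δ + γ * (1 / (n : ℝ)) ^ α) / (α * δ + γ))) :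
    0 < g₃ ∧
    ∀ s ∈ Set.Icc (0:ℝ) 1, ∀ t ∈ Set.Icc (1 / (n : ℝ)) (1 - 1 / (n : ℝ)),
      g₃ * G s s ≤ G t s := by
  obtain ⟨hα0, hα1⟩ := hα
  have hn3 : (3:ℝ) ≤ (n:ℝ) := by exact_mod_cast hn
  set a : ℝ := 1 / (n:ℝ) with ha_def
  have ha0 : 0 < a := by
    rw [ha_def]; positivity
  have ha3 : a ≤ 1/3 := by
    rw [ha_def, div_le_div_iff₀ (by linarith) (by norm_num)]; linarith
  have hγα : 0 ≤ γ / α := div_nonneg hγ hα0.le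
  have hηα : 0 ≤ η / α := div_nonneg hη hα0.le
  have hζη : 0 < α * ζ + η := by
    by_contra h; push_neg at h
    have hζ0 : ζ = 0 := by nlinarith
    have hη0 : η = 0 := by nlinarith
    rw [hd, hζ0, hη0] at hdpos
    simp at hdpos
  have hδγ : 0 < α * δ + γ := by
    by_contra h; push_neg at h
    have h1 : δ = 0 := by nlinarith
    have h2 : γ = 0 := by nlinarith
    rw [hd, h1, h2] at hdpos
    simp at hdpos
  have hp0 : (0:ℝ) ≤ 1 - a := by linarith
  have hp1 : 1 - a < 1 := by linarith
  have hpα : (1 - a) ^ α < 1 := Real.rpow_lt_one hp0 hp1 hα0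
  have hpα0 : 0 ≤ (1 - a) ^ α := Real.rpow_nonneg hp0 α
  have haα0 : 0 < a ^ α := Real.rpow_pos_of_pos ha0 α
  have haα1 : a ^ α ≤ 1 := Real.rpow_le_one ha0.le (by linarith) hα0.le
  have hnum1 : 0 < α * ζ + η * (1 - (1 - a) ^ α) := by
    nlinarith [mul_pos hζη (sub_pos.mpr hpα), mul_nonneg (mul_nonneg hα0.le hζ) hpα0]
  have hnum2 : 0 < α * δ + γ * a ^ α := by
    nlinarith [mul_pos hδγ haα0, mul_nonneg (mul_nonneg hα0.le hδ) (sub_nonneg.mpr haα1)]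
  set c₁ : ℝ := (α * ζ + η * (1 - (1 - a) ^ α)) / (α * ζ + η) with hc₁_def
  set c₂ : ℝ := (α * δ + γ * a ^ α) / (α * δ + γ) with hc₂_def
  have hc1 : 0 < c₁ := div_pos hnum1 hζη
  have hc2 : 0 < c₂ := div_pos hnum2 hδγ
  have hg₃pos : 0 < g₃ := by rw [hg₃]; exact lt_min hc1 hc2
  refine ⟨hg₃pos, ?_⟩
  intro s hs t ht
  obtain ⟨hs0, hs1⟩ := hs
  obtain ⟨hta, htb⟩ := ht
  have ht0 : 0 ≤ t := le_trans ha0.le hta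
  have hsα0 : 0 ≤ s ^ α := Real.rpow_nonneg hs0 α
  have hsα1 : s ^ α ≤ 1 := Real.rpow_le_one hs0 hs1 hα0.le
  have htα0 : 0 ≤ t ^ α := Real.rpow_nonneg ht0 α
  have htα1 : t ^ α ≤ (1 - a) ^ α := Real.rpow_le_rpow ht0 htb hα0.le
  have htαa : a ^ α ≤ t ^ α := Real.rpow_le_rpow ha0.le hta hα0.le
  have hdinv : 0 ≤ 1 / d := by positivity
  rw [hG t s, hG s s, if_pos (le_refl s)]
  by_cases hst : s ≤ t
  · rw [if_pos hst]
    have hA : 0 ≤ δ + γ / α * s ^ α := add_nonneg hδ (mul_nonneg hγα hsα0)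
    have hBs : 0 ≤ ζ + η / α * (1 - s ^ α) :=
      add_nonneg hζ (mul_nonneg hηα (by linarith))
    have hg₃le : g₃ ≤ c₁ := by rw [hg₃]; exact min_le_left _ _
    have key : g₃ * (ζ + η / α * (1 - s ^ α)) ≤ ζ + η / α * (1 - t ^ α) := by
      have step1 : g₃ * (ζ + η / α * (1 - s ^ α)) ≤ c₁ * (ζ + η / α * (1 - s ^ α)) :=
        mul_le_mul_of_nonneg_right hg₃le hBs
      have step2 : c₁ * (ζ + η / α * (1 - s ^ α)) ≤ c₁ * (ζ + η / α) := by
        apply mul_le_mul_of_nonneg_left _ hc1.le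
        nlinarith [mul_nonneg hηα hsα0]
      have step3 : c₁ * (ζ + η / α) = ζ + η / α * (1 - (1 - a) ^ α) := by
        rw [hc₁_def]
        field_simp
      have step4 : ζ + η / α * (1 - (1 - a) ^ α) ≤ ζ + η / α * (1 - t ^ α) := by
        nlinarith [mul_le_mul_of_nonneg_left (sub_le_sub_left htα1 (1:ℝ)) hηα]
      linarith
    calc g₃ * (1 / d * (δ + γ / α * s ^ α) * (ζ + η / α * (1 - s ^ α)))
        = (1 / d * (δ + γ / α * s ^ α)) * (g₃ * (ζ + η / α * (1 - s ^ α))) := by ring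
      _ ≤ (1 / d * (δ + γ / α * s ^ α)) * (ζ + η / α * (1 - t ^ α)) :=
          mul_le_mul_of_nonneg_left key (mul_nonneg hdinv hA)
  · rw [if_neg hst]
    push_neg at hst
    have hA : 0 ≤ δ + γ / α * s ^ α := add_nonneg hδ (mul_nonneg hγα hsα0)
    have hBs : 0 ≤ ζ + η / α * (1 - s ^ α) :=
      add_nonneg hζ (mul_nonneg hηα (by linarith))
    have hg₃le : g₃ ≤ c₂ := by rw [hg₃]; exact min_le_right _ _
    have key : g₃ * (δ + γ / α * s ^ α) ≤ δ + γ / α * t ^ α := by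
      have step1 : g₃ * (δ + γ / α * s ^ α) ≤ c₂ * (δ + γ / α * s ^ α) :=
        mul_le_mul_of_nonneg_right hg₃le hA
      have step2 : c₂ * (δ + γ / α * s ^ α) ≤ c₂ * (δ + γ / α) := by
        apply mul_le_mul_of_nonneg_left _ hc2.le
        nlinarith [mul_le_mul_of_nonneg_left hsα1 hγα]
      have step3 : c₂ * (δ + γ / α) = δ + γ / α * a ^ α := by
        rw [hc₂_def]
        field_simp
      have step4 : δ + γ / α * a ^ α ≤ δ + γ / α * t ^ α := by
        nlinarith [mul_le_mul_of_nonneg_left htαa hγα]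
      linarith
    calc g₃ * (1 / d * (δ + γ / α * s ^ α) * (ζ + η / α * (1 - s ^ α)))
        = (1 / d * (ζ + η / α * (1 - s ^ α))) * (g₃ * (δ + γ / α * s ^ α)) := by ring
      _ ≤ (1 / d * (ζ + η / α * (1 - s ^ α))) * (δ + γ / α * t ^ α) :=
          mul_le_mul_of_nonneg_left key (mul_nonneg hdinv hBs)
      _ = 1 / d * (δ + γ / α * t ^ α) * (ζ + η / α * (1 - s ^ α)) := by ring
end

section
/- Let G : [0,1]×[0,1] → ℝ be defined by G(t,s) = s(1 − t) if s ≤ t and G(t,s) = t(1 − s) if t ≤ s. Then there exists a continuous nonnegative function x* : [0,1] → ℝ satisfying x*(t) = ∫₀¹ G(t,s)·(1 + (1/4)sin s + x*(s)²)·s^{−1/2} ds for all t ∈ [0,1] (equivalently, x* is a positive solution of −t^{1/2} x″(t) = 1 + (1/4)sin t + x(t)² with x(0) = x(1) = 0), and such that 11/1000 ≤ min over t ∈ [1/4,3/4] of x*(t) and max over t ∈ [0,1] of x*(t) ≤ 9/25. -/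
/-!
The boundary value problem is the fixed-point equation `x = A (f(·, x))`, where
`A c t = ∫₀¹ G(t,s) c(s) s^(β-1) ds` with `β = 1/2` and `f(s, u) = 1 + (sin s)/4 + u²`.
Since `G ≥ 0` on the unit square, `A` is monotone, and it sends the constant `1` to
`w(t) = t (1 - t^β) / (β (β + 1))`, which for `β = 1/2` is `4/3 · t (1 - √t) ≤ 16/81`.
On the ball of radius `9/25` in `C([0,1])` we have `3/4 ≤ f ≤ 5/4 + (9/25)²` and `f` is
`18/25`-Lipschitz in `u`, so `x ↦ A (f(·, x))` maps the ball into itself and contracts with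
constant `32/225`. Banach's theorem yields the solution, and `f ≥ 3/4` gives
`x ≥ 3/4 · w ≥ 1/32` on `[1/4, 3/4]`.
-/

open MeasureTheory Set Function NNReal intervalIntegral

theorem exists_isFixedPt_of_mapsTo_of_lipschitzOnWith {α : Type*} [MetricSpace α]
    [CompleteSpace α] {f : α → α} {s : Set α} {K : ℝ≥0} (hK : K < 1) (hs : IsClosed s)
    (hne : s.Nonempty) (hsf : MapsTo f s s) (hf : LipschitzOnWith K f s) :
    ∃ y ∈ s, IsFixedPt f y := by
  obtain ⟨x, hx⟩ := hne
  obtain ⟨y, hys, hy, -⟩ := ContractingWith.exists_fixedPoint' hs.isComplete hsf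
    ⟨hK, hf.mapsToRestrict hsf⟩ hx (edist_ne_top _ _)
  exact ⟨y, hys, hy⟩

noncomputable section

namespace ConjugateBVP

def green (t s : ℝ) : ℝ := if s ≤ t then s * (1 - t) else t * (1 - s)

lemma green_of_le {t s : ℝ} (h : s ≤ t) : green t s = s * (1 - t) := if_pos h

lemma green_of_ge {t s : ℝ} (h : t ≤ s) : green t s = t * (1 - s) := by
  rcases h.eq_or_lt with rfl | h
  · exact green_of_le le_rfl
  · exact if_neg h.not_ge

lemma green_eq_min_sub_mul (t s : ℝ) : green t s = min s t - s * t := by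
  rcases le_total s t with h | h
  · rw [green_of_le h, min_eq_left h]; ring
  · rw [green_of_ge h, min_eq_right h]; ring

lemma continuous_green (t : ℝ) : Continuous (green t) := by
  simp only [funext (green_eq_min_sub_mul t)]
  fun_prop

lemma green_nonneg {t s : ℝ} (ht : t ∈ Icc (0:ℝ) 1) (hs : s ∈ Icc (0:ℝ) 1) : 0 ≤ green t s := by
  rcases le_total s t with h | h
  · rw [green_of_le h]; exact mul_nonneg hs.1 (by linarith [ht.2])
  · rw [green_of_ge h]; exact mul_nonneg ht.1 (by linarith [hs.2])

def greenOp (β : ℝ) (c : ℝ → ℝ) (t : ℝ) : ℝ :=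
  ∫ s in (0:ℝ)..1, green t s * c s * s ^ (β - 1)

def greenWeight (β t : ℝ) : ℝ := t * (1 - t ^ β) / (β * (β + 1))

section GreenOp

variable {β : ℝ} {c d : ℝ → ℝ} {t : ℝ}

lemma intervalIntegrable_mul_rpow {r : ℝ} (hr : -1 < r) {g : ℝ → ℝ} (hg : Continuous g)
    (a b : ℝ) : IntervalIntegrable (fun s => g s * s ^ r) volume a b :=
  (intervalIntegrable_rpow' hr).continuousOn_mul hg.continuousOn

lemma intervalIntegrable_green_mul_rpow (hβ : 0 < β) (hc : Continuous c) (t a b : ℝ) :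
    IntervalIntegrable (fun s => green t s * c s * s ^ (β - 1)) volume a b :=
  intervalIntegrable_mul_rpow (g := fun s => green t s * c s) (by linarith)
    ((continuous_green t).mul hc) a b

lemma mul_rpow_sub_one {s : ℝ} (hs : 0 ≤ s) (hβ : 0 < β) : s * s ^ (β - 1) = s ^ β := by
  rw [← sub_add_cancel β 1, Real.rpow_add_one' hs (by simp [hβ.ne']), add_sub_cancel_right,
    mul_comm]

lemma greenOp_eq (hβ : 0 < β) (hc : Continuous c) (ht : t ∈ Icc (0:ℝ) 1) :
    greenOp β c t = (1 - t) * (∫ s in (0:ℝ)..t, c s * s ^ β)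
      + t * ∫ s in t..1, (1 - s) * c s * s ^ (β - 1) := by
  have hint := intervalIntegrable_green_mul_rpow hβ hc t
  rw [greenOp, ← integral_add_adjacent_intervals (hint 0 t) (hint t 1),
    ← intervalIntegral.integral_const_mul, ← intervalIntegral.integral_const_mul]
  congr 1
  · refine integral_congr fun s hs => ?_
    rw [uIcc_of_le ht.1] at hs
    rw [green_of_le hs.2, ← mul_rpow_sub_one hs.1 hβ]
    ring
  · refine integral_congr fun s hs => ?_
    rw [uIcc_of_le ht.2] at hs
    rw [green_of_ge hs.1]
    ring

lemma continuousOn_greenOp (hβ : 0 < β) (hc : Continuous c) :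
    ContinuousOn (greenOp β c) (Icc 0 1) := by
  have hint₁ := intervalIntegrable_mul_rpow (r := β) (by linarith) hc
  have hint₂ := intervalIntegrable_mul_rpow (r := β - 1) (g := fun s => (1 - s) * c s)
    (by linarith) (by fun_prop)
  have hprim₁ := continuous_primitive hint₁ 0
  have hprim₂ := continuous_primitive hint₂ 0
  refine ContinuousOn.congr (f := fun t => (1 - t) * (∫ s in (0:ℝ)..t, c s * s ^ β)
      + t * ((∫ s in (0:ℝ)..1, (1 - s) * c s * s ^ (β - 1))
        - ∫ s in (0:ℝ)..t, (1 - s) * c s * s ^ (β - 1))) (by fun_prop) fun t ht => ?_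
  dsimp only
  rw [greenOp_eq hβ hc ht, integral_interval_sub_left (hint₂ 0 1) (hint₂ 0 t)]

lemma greenOp_sub (hβ : 0 < β) (hc : Continuous c) (hd : Continuous d) (t : ℝ) :
    greenOp β (c - d) t = greenOp β c t - greenOp β d t := by
  rw [greenOp, greenOp, greenOp, ← integral_sub (intervalIntegrable_green_mul_rpow hβ hc t 0 1)
    (intervalIntegrable_green_mul_rpow hβ hd t 0 1)]
  simp only [Pi.sub_apply, mul_sub, sub_mul]

lemma greenOp_mono (hβ : 0 < β) (hc : Continuous c) (hd : Continuous d)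
    (hcd : ∀ s ∈ Icc (0:ℝ) 1, c s ≤ d s) (ht : t ∈ Icc (0:ℝ) 1) :
    greenOp β c t ≤ greenOp β d t :=
  integral_mono_on zero_le_one (intervalIntegrable_green_mul_rpow hβ hc t 0 1)
    (intervalIntegrable_green_mul_rpow hβ hd t 0 1) fun s hs =>
    mul_le_mul_of_nonneg_right (mul_le_mul_of_nonneg_left (hcd s hs) (green_nonneg ht hs))
      (Real.rpow_nonneg hs.1 _)

lemma greenOp_const (hβ : 0 < β) (ht : t ∈ Icc (0:ℝ) 1) (m : ℝ) :
    greenOp β (fun _ => m) t = m * greenWeight β t := by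
  have hsplit : ∫ s in t..1, (1 - s) * m * s ^ (β - 1)
      = m * ((∫ s in t..1, s ^ (β - 1)) - ∫ s in t..1, s ^ β) := by
    rw [← integral_sub (intervalIntegrable_rpow' (by linarith))
      (intervalIntegrable_rpow' (by linarith)), ← intervalIntegral.integral_const_mul]
    refine integral_congr fun s hs => ?_
    rw [uIcc_of_le ht.2] at hs
    rw [← mul_rpow_sub_one (ht.1.trans hs.1) hβ]
    ring
  rw [greenOp_eq hβ continuous_const ht, hsplit, intervalIntegral.integral_const_mul,
    integral_rpow (Or.inl (by linarith)), integral_rpow (Or.inl (by linarith)),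
    integral_rpow (Or.inl (by linarith)), sub_add_cancel, Real.zero_rpow (by linarith),
    Real.one_rpow, Real.one_rpow, Real.rpow_add_one' ht.1 (by linarith), greenWeight]
  field_simp
  ring

lemma le_greenOp (hβ : 0 < β) (hc : Continuous c) {m : ℝ} (hm : ∀ s ∈ Icc (0:ℝ) 1, m ≤ c s)
    (ht : t ∈ Icc (0:ℝ) 1) : m * greenWeight β t ≤ greenOp β c t :=
  greenOp_const hβ ht m ▸ greenOp_mono hβ continuous_const hc hm ht

lemma abs_greenOp_le (hβ : 0 < β) (hc : Continuous c) {M : ℝ}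
    (hM : ∀ s ∈ Icc (0:ℝ) 1, |c s| ≤ M) (ht : t ∈ Icc (0:ℝ) 1) :
    |greenOp β c t| ≤ M * greenWeight β t := by
  have hlower := le_greenOp hβ hc (fun s hs => (abs_le.1 (hM s hs)).1) ht
  have hupper := greenOp_const hβ ht M ▸
    greenOp_mono hβ hc continuous_const (fun s hs => (abs_le.1 (hM s hs)).2) ht
  rw [abs_le]
  constructor <;> linarith

end GreenOp

lemma greenWeight_nonneg {β t : ℝ} (hβ : 0 < β) (ht : t ∈ Icc (0:ℝ) 1) : 0 ≤ greenWeight β t :=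
  div_nonneg (mul_nonneg ht.1 (sub_nonneg.2 (Real.rpow_le_one ht.1 ht.2 hβ.le))) (by positivity)

lemma greenWeight_half (t : ℝ) : greenWeight (1/2) t = 4/3 * (t * (1 - √t)) := by
  rw [greenWeight, Real.sqrt_eq_rpow]
  ring

lemma greenWeight_half_le {t : ℝ} (ht : t ∈ Icc (0:ℝ) 1) : greenWeight (1/2) t ≤ 16/81 := by
  have hsq := Real.mul_self_sqrt ht.1
  rw [greenWeight_half]
  nlinarith [mul_nonneg (sq_nonneg (3 * √t - 2)) (by positivity : (0:ℝ) ≤ 3 * √t + 1)]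

lemma one_div_twentyFour_le_greenWeight_half {t : ℝ} (ht : t ∈ Icc (1/4 : ℝ) (3/4)) :
    1/24 ≤ greenWeight (1/2) t := by
  have hsq := Real.mul_self_sqrt (show 0 ≤ t by linarith [ht.1])
  have hsqrt : √t ≤ 7/8 := by nlinarith [ht.2, Real.sqrt_nonneg t]
  rw [greenWeight_half]
  nlinarith [mul_nonneg (sub_nonneg.2 ht.1) (by linarith : (0:ℝ) ≤ 1 - √t)]

def nonlinearity (s u : ℝ) : ℝ := 1 + 1/4 * Real.sin s + u ^ 2

lemma three_div_four_le_nonlinearity (s u : ℝ) : 3/4 ≤ nonlinearity s u := by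
  rw [nonlinearity]
  nlinarith [Real.neg_one_le_sin s, sq_nonneg u]

lemma abs_nonlinearity_le {s u r : ℝ} (hu : |u| ≤ r) : |nonlinearity s u| ≤ 5/4 + r ^ 2 := by
  have hu2 : u ^ 2 ≤ r ^ 2 := by simpa only [sq_abs] using pow_le_pow_left₀ (abs_nonneg u) hu 2
  rw [abs_of_pos (by linarith [three_div_four_le_nonlinearity s u]), nonlinearity]
  linarith [Real.sin_le_one s]

lemma abs_nonlinearity_sub_le {s u v r : ℝ} (hu : |u| ≤ r) (hv : |v| ≤ r) :
    |nonlinearity s u - nonlinearity s v| ≤ 2 * r * |u - v| := by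
  have hdiff : nonlinearity s u - nonlinearity s v = (u + v) * (u - v) := by
    rw [nonlinearity, nonlinearity]; ring
  rw [hdiff, abs_mul]
  gcongr
  linarith [abs_add_le u v]

open unitInterval

lemma abs_IccExtend_le_norm (x : C(I, ℝ)) (s : ℝ) : |IccExtend zero_le_one x s| ≤ ‖x‖ :=
  x.norm_coe_le_norm _

def nemytskii (x : C(I, ℝ)) (s : ℝ) : ℝ := nonlinearity s (IccExtend zero_le_one x s)

lemma continuous_nemytskii (x : C(I, ℝ)) : Continuous (nemytskii x) := by
  unfold nemytskii nonlinearity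
  fun_prop

def hammersteinOp (x : C(I, ℝ)) : C(I, ℝ) where
  toFun t := greenOp (1/2) (nemytskii x) t
  continuous_toFun := (continuousOn_greenOp (by norm_num) (continuous_nemytskii x)).domRestrict

lemma hammersteinOp_apply (x : C(I, ℝ)) (t : I) :
    hammersteinOp x t = greenOp (1/2) (nemytskii x) t := rfl

lemma abs_nemytskii_le {x : C(I, ℝ)} {r : ℝ} (hx : ‖x‖ ≤ r) (s : ℝ) :
    |nemytskii x s| ≤ 5/4 + r ^ 2 :=
  abs_nonlinearity_le ((abs_IccExtend_le_norm x s).trans hx)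

lemma abs_nemytskii_sub_le {x y : C(I, ℝ)} {r : ℝ} (hx : ‖x‖ ≤ r) (hy : ‖y‖ ≤ r) (s : ℝ) :
    |nemytskii x s - nemytskii y s| ≤ 2 * r * dist x y := by
  refine (abs_nonlinearity_sub_le ((abs_IccExtend_le_norm x s).trans hx)
    ((abs_IccExtend_le_norm y s).trans hy)).trans ?_
  have hr : 0 ≤ r := (norm_nonneg x).trans hx
  gcongr
  rw [← Real.dist_eq]
  exact ContinuousMap.dist_apply_le_dist _

lemma mapsTo_hammersteinOp :
    MapsTo hammersteinOp (Metric.closedBall 0 (9/25)) (Metric.closedBall 0 (9/25)) := by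
  intro x hx
  rw [mem_closedBall_zero_iff] at hx ⊢
  refine (ContinuousMap.norm_le _ (by norm_num)).2 fun t => ?_
  rw [Real.norm_eq_abs, hammersteinOp_apply]
  calc |greenOp (1/2) (nemytskii x) t| ≤ (5/4 + (9/25) ^ 2) * greenWeight (1/2) t :=
        abs_greenOp_le (by norm_num) (continuous_nemytskii x)
          (fun s _ => abs_nemytskii_le hx s) t.2
    _ ≤ (5/4 + (9/25) ^ 2) * (16/81) := by gcongr; exact greenWeight_half_le t.2
    _ ≤ 9/25 := by norm_num

lemma lipschitzOnWith_hammersteinOp :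
    LipschitzOnWith (32/225) hammersteinOp (Metric.closedBall 0 (9/25)) := by
  refine LipschitzOnWith.of_dist_le_mul fun x hx y hy => ?_
  rw [mem_closedBall_zero_iff] at hx hy
  refine (ContinuousMap.dist_le (by positivity)).2 fun t => ?_
  rw [Real.dist_eq, hammersteinOp_apply, hammersteinOp_apply,
    ← greenOp_sub (by norm_num) (continuous_nemytskii x) (continuous_nemytskii y)]
  calc |greenOp (1/2) (nemytskii x - nemytskii y) t|
      ≤ 2 * (9/25) * dist x y * greenWeight (1/2) t :=
        abs_greenOp_le (by norm_num) ((continuous_nemytskii x).sub (continuous_nemytskii y))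
          (fun s _ => abs_nemytskii_sub_le hx hy s) t.2
    _ ≤ 2 * (9/25) * dist x y * (16/81) := by gcongr; exact greenWeight_half_le t.2
    _ = _ := by push_cast; ring

lemma IccExtend_eq_greenOp_of_isFixedPt {x : C(I, ℝ)} (hx : IsFixedPt hammersteinOp x) {t : ℝ}
    (ht : t ∈ I) : IccExtend zero_le_one x t = greenOp (1/2) (nemytskii x) t := by
  rw [IccExtend_of_mem _ _ ht]
  exact (DFunLike.congr_fun hx ⟨t, ht⟩).symm

end ConjugateBVP

end

open ConjugateBVP unitInterval in
/-- example: With `G(t,s) = s(1 − t)` for `s ≤ t` and `G(t,s) = t(1 − s)` for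
`t ≤ s`, there exists a continuous nonnegative function `x*` on `[0,1]` satisfying
`x*(t) = ∫₀¹ G(t,s)(1 + (1/4)sin s + x*(s)²) s^{−1/2} ds` for all `t ∈ [0,1]` (i.e. a
positive solution of `−D^{1/2} x′ = 1 + (1/4)sin t + x²`, `x(0) = x(1) = 0`), with
`11/1000 ≤ min_{[1/4,3/4]} x*` and `max_{[0,1]} x* ≤ 9/25`. -/
theorem example_conjugate_bvp_order_three_halves
    (G : ℝ → ℝ → ℝ)
    (hG : ∀ t s : ℝ, G t s = if s ≤ t then s * (1 - t) else t * (1 - s)) :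
    ∃ x' : ℝ → ℝ, ContinuousOn x' (Set.Icc (0:ℝ) 1) ∧
      (∀ t ∈ Set.Icc (0:ℝ) 1, 0 ≤ x' t) ∧
      (∀ t ∈ Set.Icc (0:ℝ) 1,
        x' t = ∫ s in (0:ℝ)..1,
          G t s * (1 + (1/4) * Real.sin s + (x' s) ^ 2) * s ^ (-(1/2) : ℝ)) ∧
      (∀ t ∈ Set.Icc (1/4 : ℝ) (3/4 : ℝ), 11/1000 ≤ x' t) ∧
      (∀ t ∈ Set.Icc (0:ℝ) 1, x' t ≤ 9/25) := by
  obtain rfl : G = green := funext₂ hG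
  obtain ⟨x, hx_mem, hx_fix⟩ := exists_isFixedPt_of_mapsTo_of_lipschitzOnWith (by norm_num)
    Metric.isClosed_closedBall (Metric.nonempty_closedBall.2 (by norm_num)) mapsTo_hammersteinOp
    lipschitzOnWith_hammersteinOp
  have hx_eq := fun t (ht : t ∈ I) => IccExtend_eq_greenOp_of_isFixedPt hx_fix ht
  have hx_lower : ∀ t ∈ I, 3/4 * greenWeight (1/2) t ≤ IccExtend zero_le_one x t := fun t ht =>
    hx_eq t ht ▸ le_greenOp (by norm_num) (continuous_nemytskii x)
      (fun s _ => three_div_four_le_nonlinearity _ _) ht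
  refine ⟨IccExtend zero_le_one x, x.continuous.Icc_extend'.continuousOn, fun t ht => ?_,
    fun t ht => ?_, fun t ht => ?_, fun t ht => ?_⟩
  · exact (mul_nonneg (by norm_num) (greenWeight_nonneg (by norm_num) ht)).trans (hx_lower t ht)
  · rw [hx_eq t ht, greenOp]
    norm_num [nemytskii, nonlinearity]
  · have hw := one_div_twentyFour_le_greenWeight_half ht
    linarith [hx_lower t ⟨by linarith [ht.1], by linarith [ht.2]⟩]
  · exact (le_abs_self _).trans
      ((abs_IccExtend_le_norm x t).trans (mem_closedBall_zero_iff.1 hx_mem))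
end
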